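/- arXiv:1407.8068 — 7 statements merged into one kernel-verified Lean document; each statement's English description precedes it below -/
import Mathlib

section
/- For every integer n ≥ 2 and every integer i with 1 ≤ i ≤ n−1, the coefficient j_n(i) satisfies c_* · (n−1)^{H−1/2} · I_n(i) ≤ j_n(i) ≤ c_* · n^{H−1/2} · I_n(i), where c_* := σ·c_H and I_n(i) := ∫_{i−1}^{i} x^{1/2−H} · ((n−x)^{H−1/2} − (n−1−x)^{H−1/2}) dx. -/
/-!
With `h = H - 1/2`, the inner integrand of `j_n(i)` is `(v + n - 1)^h · (v + n - 1 - x)^(h-1)`.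
On `v ∈ [0, 1]` the first factor lies between `(n-1)^h` and `n^h`, while the second factor
integrates exactly to `((n - x)^h - (n - 1 - x)^h) / h`. Integrating the resulting pointwise
sandwich against the nonnegative weight `x^(-h)` over `[i-1, i]` gives both bounds.
-/

open MeasureTheory

/-- The normalizing constant `c_H`. -/
noncomputable def cH (H : ℝ) : ℝ :=
  Real.sqrt (2 * H * Real.Gamma (3/2 - H) / (Real.Gamma (H + 1/2) * Real.Gamma (2 - 2*H)))

/-- The coefficient `j_n(i)` of the disturbed random walk. -/
noncomputable def jn (H σ : ℝ) (n i : ℕ) : ℝ :=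
  σ * cH H * (H - 1/2) *
    ∫ x in ((i : ℝ) - 1)..(i : ℝ),
      x ^ ((1:ℝ)/2 - H) *
        ∫ v in (0:ℝ)..1, (v + n - 1) ^ (H - 1/2) * (v + n - 1 - x) ^ (H - 3/2)

/-- `I_n(i) = ∫_{i-1}^{i} x^{1/2-H} ((n-x)^{H-1/2} - (n-1-x)^{H-1/2}) dx`. -/
noncomputable def In (H : ℝ) (n i : ℕ) : ℝ :=
  ∫ x in ((i : ℝ) - 1)..(i : ℝ),
    x ^ ((1:ℝ)/2 - H) * (((n : ℝ) - x) ^ (H - 1/2) - ((n : ℝ) - 1 - x) ^ (H - 1/2))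

open Set

theorem MeasureTheory.StronglyMeasurable.intervalIntegral_prod_right {α E : Type*}
    [MeasurableSpace α] [NormedAddCommGroup E] [NormedSpace ℝ E] {f : α → ℝ → E}
    (hf : StronglyMeasurable (Function.uncurry f)) (a b : ℝ) :
    StronglyMeasurable fun x => ∫ v in a..b, f x v :=
  hf.integral_prod_right.sub hf.integral_prod_right

namespace intervalIntegral

theorem integral_mem_Icc_of_forall_mem_Icc {f g : ℝ → ℝ} {a b c d : ℝ} (hab : a ≤ b)
    (hf : AEStronglyMeasurable f (volume.restrict (Ioc a b)))
    (hg : IntervalIntegrable g volume a b)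
    (hfg : ∀ x ∈ Icc a b, f x ∈ Icc (c * g x) (d * g x)) :
    ∫ x in a..b, f x ∈ Icc (c * ∫ x in a..b, g x) (d * ∫ x in a..b, g x) := by
  have hlo := fun x hx => (hfg x hx).1
  have hhi := fun x hx => (hfg x hx).2
  have hfi : IntervalIntegrable f volume a b := by
    rw [intervalIntegrable_iff_integrableOn_Ioc_of_le hab]
    exact integrable_of_le_of_le hf
      (ae_restrict_of_forall_mem measurableSet_Ioc fun x hx => hlo x (Ioc_subset_Icc_self hx))
      (ae_restrict_of_forall_mem measurableSet_Ioc fun x hx => hhi x (Ioc_subset_Icc_self hx))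
      (hg.const_mul c).1 (hg.const_mul d).1
  rw [← integral_const_mul, ← integral_const_mul]
  exact ⟨integral_mono_on hab (hg.const_mul c) hfi hlo,
    integral_mono_on hab hfi (hg.const_mul d) hhi⟩

theorem integral_rpow_add_zero_one {h : ℝ} (hh : 0 < h) (a : ℝ) :
    ∫ v in (0:ℝ)..1, (v + a) ^ (h - 1) = ((1 + a) ^ h - a ^ h) / h := by
  rw [integral_comp_add_right (fun u => u ^ (h - 1)), zero_add,
    integral_rpow (Or.inl (by linarith)), sub_add_cancel]

theorem mul_integral_rpow_add_mul_rpow_add_mem_Icc {h m a : ℝ} (hh : 0 < h) (hm : 0 ≤ m)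
    (ha : 0 ≤ a) :
    h * ∫ v in (0:ℝ)..1, (v + m) ^ h * (v + a) ^ (h - 1) ∈
      Icc (m ^ h * ((1 + a) ^ h - a ^ h)) ((m + 1) ^ h * ((1 + a) ^ h - a ^ h)) := by
  have hg : IntervalIntegrable (fun v => (v + a) ^ (h - 1)) volume 0 1 := by
    simpa using (intervalIntegrable_rpow' (a := a) (b := 1 + a) (by linarith)).comp_add_right a
  have hbounds := integral_mem_Icc_of_forall_mem_Icc (c := m ^ h) (d := (m + 1) ^ h)
    zero_le_one
    (by fun_prop : Measurable fun v : ℝ => (v + m) ^ h * (v + a) ^ (h - 1)).aestronglyMeasurable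
    hg fun v hv => by
      have hw : 0 ≤ (v + a) ^ (h - 1) := Real.rpow_nonneg (by linarith [hv.1]) _
      exact ⟨mul_le_mul_of_nonneg_right
          (Real.rpow_le_rpow hm (by linarith [hv.1]) hh.le) hw,
        mul_le_mul_of_nonneg_right
          (Real.rpow_le_rpow (by linarith [hv.1]) (by linarith [hv.2]) hh.le) hw⟩
  rw [integral_rpow_add_zero_one hh] at hbounds
  constructor
  · calc m ^ h * ((1 + a) ^ h - a ^ h) = h * (m ^ h * (((1 + a) ^ h - a ^ h) / h)) := by
          field_simp
      _ ≤ _ := mul_le_mul_of_nonneg_left hbounds.1 hh.le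
  · calc _ ≤ h * ((m + 1) ^ h * (((1 + a) ^ h - a ^ h) / h)) :=
          mul_le_mul_of_nonneg_left hbounds.2 hh.le
      _ = (m + 1) ^ h * ((1 + a) ^ h - a ^ h) := by field_simp

end intervalIntegral

noncomputable def jnKernel (H : ℝ) (n : ℕ) (x : ℝ) : ℝ :=
  ∫ v in (0:ℝ)..1, (v + n - 1) ^ (H - 1/2) * (v + n - 1 - x) ^ (H - 3/2)

theorem stronglyMeasurable_jnKernel (H : ℝ) (n : ℕ) : StronglyMeasurable (jnKernel H n) :=
  StronglyMeasurable.intervalIntegral_prod_right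
    (f := fun x v : ℝ => (v + n - 1) ^ (H - 1/2) * (v + n - 1 - x) ^ (H - 3/2))
    (by fun_prop : Measurable _).stronglyMeasurable 0 1

theorem mul_jnKernel_mem_Icc {H : ℝ} (hH : 1/2 < H) {n : ℕ} {x : ℝ} (hn : (1:ℝ) ≤ n)
    (hx : x ≤ n - 1) :
    (H - 1/2) * jnKernel H n x ∈
      Icc (((n:ℝ) - 1) ^ (H - 1/2) * (((n:ℝ) - x) ^ (H - 1/2) - ((n:ℝ) - 1 - x) ^ (H - 1/2)))
        ((n:ℝ) ^ (H - 1/2) * (((n:ℝ) - x) ^ (H - 1/2) - ((n:ℝ) - 1 - x) ^ (H - 1/2))) := by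
  have hbounds := intervalIntegral.mul_integral_rpow_add_mul_rpow_add_mem_Icc
    (h := H - 1/2) (m := n - 1) (a := n - 1 - x) (by linarith) (by linarith) (by linarith)
  rw [show (1:ℝ) + (n - 1 - x) = n - x by ring, sub_add_cancel] at hbounds
  convert hbounds using 2
  unfold jnKernel
  congr 1 with v
  ring_nf

theorem jn_eq_mul_integral (H σ : ℝ) (n i : ℕ) :
    jn H σ n i = σ * cH H *
      ∫ x in ((i : ℝ) - 1)..(i : ℝ), x ^ ((1:ℝ)/2 - H) * ((H - 1/2) * jnKernel H n x) := by
  rw [jn, mul_assoc, ← intervalIntegral.integral_const_mul]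
  simp_rw [mul_left_comm (H - 1/2)]
  rfl

theorem integral_rpow_mul_jnKernel_mem_Icc {H : ℝ} (hH : H ∈ Ioo (1/2 : ℝ) 1) {n i : ℕ}
    (hi : 1 ≤ i) (hi' : i ≤ n - 1) :
    ∫ x in ((i : ℝ) - 1)..(i : ℝ), x ^ ((1:ℝ)/2 - H) * ((H - 1/2) * jnKernel H n x) ∈
      Icc (((n:ℝ) - 1) ^ (H - 1/2) * In H n i) ((n:ℝ) ^ (H - 1/2) * In H n i) := by
  obtain ⟨hH1, hH2⟩ := hH
  have hi1 : (1:ℝ) ≤ i := by exact_mod_cast hi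
  have hin : (i:ℝ) ≤ n - 1 := by
    rw [le_sub_iff_add_le]
    exact_mod_cast (by omega : i + 1 ≤ n)
  have hG : Continuous fun x : ℝ =>
      ((n:ℝ) - x) ^ (H - 1/2) - ((n:ℝ) - 1 - x) ^ (H - 1/2) := by
    have := Real.continuous_rpow_const (q := H - 1/2) (by linarith)
    fun_prop
  refine intervalIntegral.integral_mem_Icc_of_forall_mem_Icc (by linarith)
    ((by fun_prop : Measurable fun x : ℝ => x ^ ((1:ℝ)/2 - H)).mul
      (measurable_const.mul (stronglyMeasurable_jnKernel H n).measurable)).aestronglyMeasurable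
    ((intervalIntegral.intervalIntegrable_rpow' (r := 1/2 - H) (by linarith)).mul_continuousOn
      hG.continuousOn)
    fun x hx => ?_
  have hw : 0 ≤ x ^ ((1:ℝ)/2 - H) := Real.rpow_nonneg (by linarith [hx.1]) _
  have hk := mul_jnKernel_mem_Icc hH1 (by linarith) (hx.2.trans hin)
  rw [mul_left_comm _ (x ^ _), mul_left_comm _ (x ^ _)]
  exact ⟨mul_le_mul_of_nonneg_left hk.1 hw, mul_le_mul_of_nonneg_left hk.2 hw⟩

theorem jn_bounds_general (H σ : ℝ) (hH : H ∈ Set.Ioo (1/2 : ℝ) 1) (hσ : 0 < σ)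
    (n i : ℕ) (hi : 1 ≤ i) (hi' : i ≤ n - 1) :
    σ * cH H * ((n : ℝ) - 1) ^ (H - 1/2) * In H n i ≤ jn H σ n i ∧
      jn H σ n i ≤ σ * cH H * (n : ℝ) ^ (H - 1/2) * In H n i := by
  have hc : 0 ≤ σ * cH H := mul_nonneg hσ.le (Real.sqrt_nonneg _)
  have hbounds := integral_rpow_mul_jnKernel_mem_Icc hH hi hi'
  rw [jn_eq_mul_integral, mul_assoc (σ * cH H), mul_assoc (σ * cH H)]
  exact ⟨mul_le_mul_of_nonneg_left hbounds.1 hc, mul_le_mul_of_nonneg_left hbounds.2 hc⟩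

/-- Lemma 2.6 (Lemma `ej1`): for `1 ≤ i ≤ n-1`,
`c_* (n-1)^{H-1/2} I_n(i) ≤ j_n(i) ≤ c_* n^{H-1/2} I_n(i)` where `c_* = σ c_H`. -/
theorem jn_bounds (H σ : ℝ) (hH : H ∈ Set.Ioo (1/2 : ℝ) 1) (hσ : 0 < σ)
    (n i : ℕ) (hn : 2 ≤ n) (hi : 1 ≤ i) (hi' : i ≤ n - 1) :
    σ * cH H * ((n : ℝ) - 1) ^ (H - 1/2) * In H n i ≤ jn H σ n i ∧
      jn H σ n i ≤ σ * cH H * (n : ℝ) ^ (H - 1/2) * In H n i :=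
  jn_bounds_general H σ hH hσ n i hi hi'
end

section
/- For every integer n ≥ 2 one has g ≤ g_n ≤ g·(1 + 1/(n−1))^{H−1/2} ≤ g·2^{H−1/2}, where g := σ·c_H/(H+1/2). In particular g_n → g as n → ∞. -/
/-!
Write `p = H - 1/2`, so that `g_n = σ c_H p ∫_{n-1}^n x^{-p} I(x) (n-x)^p dx` with
`I(x) = gnInner p n x = ∫_0^1 (y(n-x)+x)^p y^{p-1} dy`. Since `x ≤ y(n-x)+x ≤ n`, we get
`x^p/p ≤ I(x) ≤ n^p/p`, so on `[n-1, n]` the factor `x^{-p} I(x)` lies between `1/p` and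
`(n/(n-1))^p / p`. Integrating against the weight `(n-x)^p`, of total mass `1/(p+1)`, gives both
bounds on `g_n`, and the limit follows by squeezing.
-/

open MeasureTheory

/-- The coefficient `g_n` of the disturbed random walk. -/
noncomputable def gn (H σ : ℝ) (n : ℕ) : ℝ :=
  σ * cH H * (H - 1/2) *
    ∫ x in ((n : ℝ) - 1)..(n : ℝ),
      x ^ ((1:ℝ)/2 - H) * ((n : ℝ) - x) ^ (H - 1/2) *
        ∫ y in (0:ℝ)..1, (y * ((n : ℝ) - x) + x) ^ (H - 1/2) * y ^ (H - 3/2)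

open Set Filter Topology

theorem integral_mul_mem_Icc_of_mem_Icc {f w : ℝ → ℝ} {a b lo hi : ℝ} (hab : a ≤ b)
    (hw : IntervalIntegrable w volume a b)
    (hfw : IntervalIntegrable (fun x => f x * w x) volume a b)
    (hw0 : ∀ x ∈ Icc a b, 0 ≤ w x) (hf : ∀ x ∈ Icc a b, f x ∈ Icc lo hi) :
    ∫ x in a..b, f x * w x ∈ Icc (lo * ∫ x in a..b, w x) (hi * ∫ x in a..b, w x) := by
  rw [← intervalIntegral.integral_const_mul, ← intervalIntegral.integral_const_mul]
  exact ⟨intervalIntegral.integral_mono_on hab (hw.const_mul lo) hfw fun x hx =>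
      mul_le_mul_of_nonneg_right (hf x hx).1 (hw0 x hx),
    intervalIntegral.integral_mono_on hab hfw (hw.const_mul hi) fun x hx =>
      mul_le_mul_of_nonneg_right (hf x hx).2 (hw0 x hx)⟩

section

variable {p : ℝ}

theorem integral_rpow_sub_one_zero_one (hp : 0 < p) : ∫ y in (0:ℝ)..1, y ^ (p - 1) = 1 / p := by
  rw [integral_rpow (Or.inl (by linarith)), sub_add_cancel, Real.one_rpow,
    Real.zero_rpow hp.ne', sub_zero]

theorem integral_self_sub_rpow (hp : -1 < p) (N : ℝ) :
    ∫ x in (N - 1)..N, (N - x) ^ p = 1 / (p + 1) := by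
  rw [intervalIntegral.integral_comp_sub_left (fun t => t ^ p), sub_self, sub_sub_cancel,
    integral_rpow (Or.inl hp), Real.one_rpow, Real.zero_rpow (by linarith), sub_zero]

noncomputable def gnInner (p N x : ℝ) : ℝ :=
  ∫ y in (0:ℝ)..1, (y * (N - x) + x) ^ p * y ^ (p - 1)

theorem intervalIntegrable_gnInner_integrand (hp : 0 < p) (N x : ℝ) :
    IntervalIntegrable (fun y => (y * (N - x) + x) ^ p * y ^ (p - 1)) volume 0 1 :=
  (intervalIntegral.intervalIntegrable_rpow' (by linarith)).continuousOn_mul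
    ((by fun_prop : Continuous fun y : ℝ => y * (N - x) + x).rpow_const
      fun _ => Or.inr hp.le).continuousOn

theorem gnInner_mem_Icc (hp : 0 < p) {N x : ℝ} (hx : 0 ≤ x) (hxN : x ≤ N) :
    gnInner p N x ∈ Icc (x ^ p / p) (N ^ p / p) := by
  have hmean := integral_mul_mem_Icc_of_mem_Icc zero_le_one
    (intervalIntegral.intervalIntegrable_rpow' (by linarith : -1 < p - 1))
    (intervalIntegrable_gnInner_integrand hp N x)
    (fun y hy => Real.rpow_nonneg hy.1 _)
    (fun y hy => ⟨Real.rpow_le_rpow hx (by nlinarith [hy.1]) hp.le,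
      Real.rpow_le_rpow (by nlinarith [hy.1]) (by nlinarith [hy.2]) hp.le⟩)
  rwa [integral_rpow_sub_one_zero_one hp, mul_one_div, mul_one_div] at hmean

theorem monotoneOn_gnInner (hp : 0 < p) (N : ℝ) : MonotoneOn (gnInner p N) (Icc 0 N) := by
  intro x hx x' hx' hxx'
  refine intervalIntegral.integral_mono_on zero_le_one
    (intervalIntegrable_gnInner_integrand hp N x)
    (intervalIntegrable_gnInner_integrand hp N x') fun y hy => ?_
  refine mul_le_mul_of_nonneg_right (Real.rpow_le_rpow ?_ ?_ hp.le) (Real.rpow_nonneg hy.1 _)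
  · nlinarith [hy.1, hx.1, hx.2]
  · nlinarith [hy.2, hx'.2]

theorem rpow_neg_mul_gnInner_mem_Icc (hp : 0 < p) {N x : ℝ} (hx : x ∈ Icc (N - 1) N)
    (hN : 1 < N) : x ^ (-p) * gnInner p N x ∈ Icc (1 / p) ((N / (N - 1)) ^ p / p) := by
  have hx0 : 0 < x := by linarith [hx.1]
  obtain ⟨hlo, hhi⟩ := gnInner_mem_Icc hp hx0.le hx.2
  constructor
  · calc 1 / p = x ^ (-p) * (x ^ p / p) := by
          rw [Real.rpow_neg hx0.le, mul_div_assoc', inv_mul_cancel₀ (by positivity)]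
      _ ≤ x ^ (-p) * gnInner p N x := by gcongr
  · calc x ^ (-p) * gnInner p N x ≤ (N - 1) ^ (-p) * (N ^ p / p) :=
          mul_le_mul (Real.rpow_le_rpow_of_nonpos (by linarith) hx.1 (by linarith)) hhi
            ((div_nonneg (Real.rpow_nonneg hx0.le _) hp.le).trans hlo)
            (Real.rpow_nonneg (by linarith) _)
      _ = (N / (N - 1)) ^ p / p := by
          rw [Real.div_rpow (by linarith) (by linarith), Real.rpow_neg (by linarith)]
          ring

theorem integral_gnInner_mem_Icc (hp : 0 < p) {N : ℝ} (hN : 1 < N) :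
    ∫ x in (N - 1)..N, x ^ (-p) * gnInner p N x * (N - x) ^ p ∈
      Icc (1 / p * (1 / (p + 1))) ((N / (N - 1)) ^ p / p * (1 / (p + 1))) := by
  have hsub : uIcc (N - 1) N ⊆ Icc (N - 1) N := (uIcc_of_le (by linarith)).subset
  have hw : Continuous fun x : ℝ => (N - x) ^ p :=
    (continuous_const.sub continuous_id).rpow_const fun _ => Or.inr hp.le
  have hneg : ContinuousOn (fun x : ℝ => x ^ (-p)) (uIcc (N - 1) N) :=
    continuousOn_id.rpow_const fun x hx => Or.inl (by linarith [(hsub hx).1] : (0:ℝ) < x).ne'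
  have hinner : IntervalIntegrable (gnInner p N) volume (N - 1) N :=
    ((monotoneOn_gnInner hp N).mono fun x hx =>
      ⟨by linarith [(hsub hx).1], (hsub hx).2⟩).intervalIntegrable
  have hmean := integral_mul_mem_Icc_of_mem_Icc (by linarith) (hw.intervalIntegrable _ _)
    ((hinner.continuousOn_mul hneg).mul_continuousOn hw.continuousOn)
    (fun x hx => Real.rpow_nonneg (by linarith [hx.2]) _)
    fun x hx => rpow_neg_mul_gnInner_mem_Icc hp hx hN
  rwa [integral_self_sub_rpow (by linarith)] at hmean

end

theorem gn_eq (H σ : ℝ) (n : ℕ) :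
    gn H σ n = σ * cH H * (H - 1/2) * ∫ x in ((n : ℝ) - 1)..(n : ℝ),
      x ^ (-(H - 1/2)) * gnInner (H - 1/2) n x * ((n : ℝ) - x) ^ (H - 1/2) := by
  rw [gn]
  congr 1
  refine intervalIntegral.integral_congr fun x _ => ?_
  rw [gnInner, show (1:ℝ)/2 - H = -(H - 1/2) by ring, show H - 3/2 = H - 1/2 - 1 by ring]
  ring

theorem gn_mem_Icc {H σ : ℝ} (hH : 1/2 < H) (hσ : 0 ≤ σ) {n : ℕ} (hn : 1 < n) :
    gn H σ n ∈ Icc (σ * cH H / (H + 1/2))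
      (σ * cH H / (H + 1/2) * ((n : ℝ) / ((n : ℝ) - 1)) ^ (H - 1/2)) := by
  have hp : 0 < H - 1/2 := by linarith
  have hK : 0 ≤ σ * cH H * (H - 1/2) := mul_nonneg (mul_nonneg hσ (Real.sqrt_nonneg _)) hp.le
  have hscale (B : ℝ) : σ * cH H * (H - 1/2) * (B / (H - 1/2) * (1 / (H - 1/2 + 1)))
      = σ * cH H / (H + 1/2) * B := by
    generalize hq : H - 1/2 = p at hp ⊢
    rw [show H + 1/2 = p + 1 by linarith]
    field_simp
  obtain ⟨hlo, hhi⟩ := integral_gnInner_mem_Icc hp (N := n) (by exact_mod_cast hn)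
  rw [gn_eq]
  constructor
  · calc σ * cH H / (H + 1/2)
        = σ * cH H * (H - 1/2) * (1 / (H - 1/2) * (1 / (H - 1/2 + 1))) := by
          rw [hscale, mul_one]
      _ ≤ _ := mul_le_mul_of_nonneg_left hlo hK
  · exact (mul_le_mul_of_nonneg_left hhi hK).trans_eq (hscale _)

/-- Lemma 2.7 (Lemma `eg1`): with `g := σ c_H / (H + 1/2)`, for all `n ≥ 2`,
`g ≤ g_n ≤ g (1 + 1/(n-1))^{H-1/2} ≤ g 2^{H-1/2}`; in particular `g_n → g`. -/
theorem gn_bounds (H σ : ℝ) (hH : H ∈ Set.Ioo (1/2 : ℝ) 1) (hσ : 0 < σ) :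
    (∀ n : ℕ, 2 ≤ n →
      σ * cH H / (H + 1/2) ≤ gn H σ n ∧
      gn H σ n ≤ σ * cH H / (H + 1/2) * (1 + 1 / ((n : ℝ) - 1)) ^ (H - 1/2) ∧
      σ * cH H / (H + 1/2) * (1 + 1 / ((n : ℝ) - 1)) ^ (H - 1/2) ≤
        σ * cH H / (H + 1/2) * (2 : ℝ) ^ (H - 1/2)) ∧
    Filter.Tendsto (gn H σ) Filter.atTop (nhds (σ * cH H / (H + 1/2))) := by
  have hg : 0 ≤ σ * cH H / (H + 1/2) :=
    div_nonneg (mul_nonneg hσ.le (Real.sqrt_nonneg _)) (by linarith [hH.1])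
  refine ⟨fun n hn => ?_, ?_⟩
  · have hn' : (2 : ℝ) ≤ n := by exact_mod_cast hn
    have hratio : 1 + 1 / ((n : ℝ) - 1) = n / (n - 1) := by
      field_simp [show (n : ℝ) - 1 ≠ 0 by linarith]
      ring
    have hratio_le : (n : ℝ) / (n - 1) ≤ 2 := by
      rw [div_le_iff₀ (by linarith)]
      linarith
    rw [hratio]
    exact ⟨(gn_mem_Icc hH.1 hσ.le hn).1, (gn_mem_Icc hH.1 hσ.le hn).2,
      mul_le_mul_of_nonneg_left (Real.rpow_le_rpow (div_nonneg (by linarith) (by linarith))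
        hratio_le (by linarith [hH.1])) hg⟩
  · have hupper := ((tendsto_natCast_div_add_atTop (-1 : ℝ)).rpow_const (p := H - 1/2)
      (Or.inl one_ne_zero)).const_mul (σ * cH H / (H + 1/2))
    simp only [Real.one_rpow, mul_one, ← sub_eq_add_neg] at hupper
    refine tendsto_of_tendsto_of_tendsto_of_le_of_le' tendsto_const_nhds hupper ?_ ?_ <;>
      filter_upwards [eventually_gt_atTop 1] with n hn
    exacts [(gn_mem_Icc hH.1 hσ.le hn).1, (gn_mem_Icc hH.1 hσ.le hn).2]
end

section
/- There exist a constant ĉ_* > 0 and an integer n₂ ≥ 2 such that for every n ≥ n₂ one has ∑_{i=1}^{n−1} j_n(i) − g_n ≥ ĉ_* · n^{H−1/2}. In particular ∑_{i=1}^{n−1} j_n(i) ≥ ĉ_* · n^{H−1/2} for all n ≥ n₂. -/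
open MeasureTheory

/-!
Write `p = H - 1/2` and `A = σ c_H p`. For `x ≤ n - 1` the inner integrand of `j_n(i)` satisfies
`x^{-p} (v + n - 1)^p ≥ 1` and `(v + n - 1 - x)^{p - 1} ≥ n^{p - 1}`, so every `j_n(i)` is at least
`A n^{p - 1}` and the `n - 1` terms sum to at least `A n^p / 2`. For `g_n`, the bounds
`(n - x)^p ≤ 1`, `(n / x)^p ≤ 2` and `∫_0^1 y^{p - 1} dy = 1 / p` give `g_n ≤ 2 σ c_H`, which is at
most `A n^p / 4` once `p n^p ≥ 8`.
-/

open Set Filter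

lemma integral_mono_of_nonneg_on_Ioo {f g : ℝ → ℝ} {a b : ℝ} (hab : a ≤ b)
    (hg : IntervalIntegrable g volume a b) (hf : ∀ x ∈ Ioo a b, 0 ≤ f x)
    (hfg : ∀ x ∈ Ioo a b, f x ≤ g x) :
    ∫ x in a..b, f x ≤ ∫ x in a..b, g x := by
  simp only [intervalIntegral.integral_of_le hab, integral_Ioc_eq_integral_Ioo]
  exact integral_mono_of_nonneg (ae_restrict_of_forall_mem measurableSet_Ioo hf)
    (hg.1.mono_set Ioo_subset_Ioc_self) (ae_restrict_of_forall_mem measurableSet_Ioo hfg)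

lemma integral_zero_one_rpow {r : ℝ} (hr : -1 < r) :
    ∫ y in (0:ℝ)..1, y ^ r = 1 / (r + 1) := by
  rw [integral_rpow (Or.inl hr), Real.one_rpow, Real.zero_rpow (by linarith), sub_zero]

lemma integral_zero_one_le_of_le_mul_rpow {f : ℝ → ℝ} {M r : ℝ} (hr : -1 < r)
    (hf : ∀ y ∈ Ioo (0:ℝ) 1, 0 ≤ f y) (hfM : ∀ y ∈ Ioo (0:ℝ) 1, f y ≤ M * y ^ r) :
    ∫ y in (0:ℝ)..1, f y ≤ M / (r + 1) :=
  calc ∫ y in (0:ℝ)..1, f y ≤ ∫ y in (0:ℝ)..1, M * y ^ r :=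
        integral_mono_of_nonneg_on_Ioo zero_le_one
          ((intervalIntegral.intervalIntegrable_rpow' hr).const_mul M) hf hfM
    _ = M / (r + 1) := by
        rw [intervalIntegral.integral_const_mul, integral_zero_one_rpow hr, mul_one_div]

lemma measurable_intervalIntegral {F : ℝ → ℝ → ℝ} (hF : Measurable (Function.uncurry F))
    (a b : ℝ) : Measurable fun x ↦ ∫ v in a..b, F x v := by
  simp only [intervalIntegral]
  exact (hF.stronglyMeasurable.integral_prod_right.sub
    hF.stronglyMeasurable.integral_prod_right).measurable

lemma cH_pos {H : ℝ} (h0 : 0 < H) (h1 : H < 1) : 0 < cH H := by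
  unfold cH
  have := Real.Gamma_pos_of_pos (show 0 < 3/2 - H by linarith)
  have := Real.Gamma_pos_of_pos (show 0 < H + 1/2 by linarith)
  have := Real.Gamma_pos_of_pos (show 0 < 2 - 2 * H by linarith)
  positivity

section
variable {H N x : ℝ}

lemma jn_inner_le (h1 : 1/2 < H) (h2 : H ≤ 3/2) (hN : 1 ≤ N) (hx : x ≤ N - 1) :
    ∫ v in (0:ℝ)..1, (v + N - 1) ^ (H - 1/2) * (v + N - 1 - x) ^ (H - 3/2)
      ≤ N ^ (H - 1/2) / (H - 1/2) := by
  convert integral_zero_one_le_of_le_mul_rpow (M := N ^ (H - 1/2)) (r := H - 3/2)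
    (by linarith) (fun v hv ↦ ?_) (fun v hv ↦ ?_) using 2
  · ring
  · exact mul_nonneg (Real.rpow_nonneg (by linarith [hv.1]) _)
      (Real.rpow_nonneg (by linarith [hv.1]) _)
  · exact mul_le_mul (Real.rpow_le_rpow (by linarith [hv.1]) (by linarith [hv.2]) (by linarith))
      (Real.rpow_le_rpow_of_nonpos hv.1 (by linarith) (by linarith))
      (Real.rpow_nonneg (by linarith [hv.1]) _) (Real.rpow_nonneg (by linarith) _)

lemma le_jn_integrand (h1 : 1/2 ≤ H) (h2 : H ≤ 3/2) (hx : 0 < x) (hxN : x < N - 1) :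
    N ^ (H - 3/2) ≤ x ^ ((1:ℝ)/2 - H) *
      ∫ v in (0:ℝ)..1, (v + N - 1) ^ (H - 1/2) * (v + N - 1 - x) ^ (H - 3/2) := by
  have hcont : ContinuousOn
      (fun v ↦ (v + N - 1) ^ (H - 1/2) * (v + N - 1 - x) ^ (H - 3/2)) (uIcc 0 1) := by
    rw [uIcc_of_le zero_le_one]
    exact ContinuousOn.mul
      ((continuousOn_id.add continuousOn_const).sub continuousOn_const |>.rpow_const
        fun v hv ↦ Or.inl (by linarith [hv.1] : (0:ℝ) < v + N - 1).ne')
      ((continuousOn_id.add continuousOn_const).sub continuousOn_const |>.sub continuousOn_const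
        |>.rpow_const fun v hv ↦ Or.inl (by linarith [hv.1] : (0:ℝ) < v + N - 1 - x).ne')
  calc N ^ (H - 3/2)
      = x ^ ((1:ℝ)/2 - H) * ∫ _ in (0:ℝ)..1, x ^ (H - 1/2) * N ^ (H - 3/2) := by
        rw [intervalIntegral.integral_const, sub_zero, one_smul, ← mul_assoc, ← Real.rpow_add hx]
        norm_num
    _ ≤ _ := by
        refine mul_le_mul_of_nonneg_left (intervalIntegral.integral_mono_on zero_le_one
          intervalIntegrable_const (hcont.intervalIntegrable) fun v hv ↦ ?_)
          (Real.rpow_nonneg hx.le _)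
        exact mul_le_mul (Real.rpow_le_rpow hx.le (by linarith [hv.1]) (by linarith))
          (Real.rpow_le_rpow_of_nonpos (by linarith [hv.1]) (by linarith [hv.2]) (by linarith))
          (Real.rpow_nonneg (by linarith) _) (Real.rpow_nonneg (by linarith [hv.1]) _)

lemma jn_inner_nonneg (hN : 1 ≤ N) (hx : x ≤ N - 1) :
    0 ≤ ∫ v in (0:ℝ)..1, (v + N - 1) ^ (H - 1/2) * (v + N - 1 - x) ^ (H - 3/2) :=
  intervalIntegral.integral_nonneg zero_le_one fun v hv ↦
    mul_nonneg (Real.rpow_nonneg (by linarith [hv.1]) _) (Real.rpow_nonneg (by linarith [hv.1]) _)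

lemma intervalIntegrable_jn_integrand (h1 : 1/2 < H) (h2 : H < 3/2) (hN : 1 ≤ N) {a b : ℝ}
    (ha : 0 ≤ a) (hab : a ≤ b) (hb : b ≤ N - 1) :
    IntervalIntegrable (fun x ↦ x ^ ((1:ℝ)/2 - H) *
      ∫ v in (0:ℝ)..1, (v + N - 1) ^ (H - 1/2) * (v + N - 1 - x) ^ (H - 3/2)) volume a b := by
  have hmeas : Measurable fun x ↦ x ^ ((1:ℝ)/2 - H) *
      ∫ v in (0:ℝ)..1, (v + N - 1) ^ (H - 1/2) * (v + N - 1 - x) ^ (H - 3/2) :=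
    (measurable_id.pow_const _).mul (measurable_intervalIntegral (by fun_prop) 0 1)
  refine ((intervalIntegral.intervalIntegrable_rpow' (r := 1/2 - H) (by linarith)).mul_const
    (N ^ (H - 1/2) / (H - 1/2))).mono_fun hmeas.aestronglyMeasurable ?_
  rw [uIoc_of_le hab]
  filter_upwards [ae_restrict_mem measurableSet_Ioc] with x hx
  have hx0 : 0 ≤ x ^ ((1:ℝ)/2 - H) := Real.rpow_nonneg (by linarith [hx.1]) _
  rw [Real.norm_of_nonneg (mul_nonneg hx0 (jn_inner_nonneg hN (by linarith [hx.2]))),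
    Real.norm_of_nonneg (mul_nonneg hx0 (div_nonneg (Real.rpow_nonneg (by linarith) _)
      (by linarith)))]
  exact mul_le_mul_of_nonneg_left (jn_inner_le h1 h2.le hN (by linarith [hx.2])) hx0

lemma gn_inner_nonneg (hx : 0 ≤ x) (hxN : x ≤ N) :
    0 ≤ ∫ y in (0:ℝ)..1, (y * (N - x) + x) ^ (H - 1/2) * y ^ (H - 3/2) :=
  intervalIntegral.integral_nonneg zero_le_one fun y hy ↦
    mul_nonneg (Real.rpow_nonneg (by nlinarith [hy.1]) _) (Real.rpow_nonneg hy.1 _)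

lemma gn_inner_le (h1 : 1/2 < H) (hx : 0 ≤ x) (hxN : x ≤ N) :
    ∫ y in (0:ℝ)..1, (y * (N - x) + x) ^ (H - 1/2) * y ^ (H - 3/2)
      ≤ N ^ (H - 1/2) / (H - 1/2) := by
  convert integral_zero_one_le_of_le_mul_rpow (M := N ^ (H - 1/2)) (r := H - 3/2)
    (by linarith) (fun y hy ↦ ?_) (fun y hy ↦ ?_) using 2
  · ring
  · exact mul_nonneg (Real.rpow_nonneg (by nlinarith [hy.1]) _) (Real.rpow_nonneg hy.1.le _)
  · exact mul_le_mul_of_nonneg_right (Real.rpow_le_rpow (by nlinarith [hy.1])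
      (by nlinarith [hy.2]) (by linarith)) (Real.rpow_nonneg hy.1.le _)

lemma gn_integrand_le (h1 : 1/2 < H) (h2 : H ≤ 3/2) (hN : 2 ≤ N) (hx : N - 1 < x)
    (hxN : x ≤ N) :
    x ^ ((1:ℝ)/2 - H) * (N - x) ^ (H - 1/2) *
      ∫ y in (0:ℝ)..1, (y * (N - x) + x) ^ (H - 1/2) * y ^ (H - 3/2) ≤ 2 / (H - 1/2) := by
  have hx0 : 0 < x := by linarith
  have hratio : x ^ ((1:ℝ)/2 - H) * N ^ (H - 1/2) ≤ 2 :=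
    calc x ^ ((1:ℝ)/2 - H) * N ^ (H - 1/2) = (N / x) ^ (H - 1/2) := by
          rw [Real.div_rpow (by linarith) hx0.le, show (1:ℝ)/2 - H = -(H - 1/2) by ring,
            Real.rpow_neg hx0.le, inv_mul_eq_div]
      _ ≤ (N / x) ^ (1:ℝ) :=
          Real.rpow_le_rpow_of_exponent_le (by rw [le_div_iff₀ hx0]; linarith) (by linarith)
      _ ≤ 2 := by rw [Real.rpow_one, div_le_iff₀ hx0]; linarith
  calc _ ≤ x ^ ((1:ℝ)/2 - H) * 1 * (N ^ (H - 1/2) / (H - 1/2)) :=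
        mul_le_mul (mul_le_mul_of_nonneg_left
            (Real.rpow_le_one (by linarith) (by linarith) (by linarith))
            (Real.rpow_nonneg hx0.le _))
          (gn_inner_le h1 hx0.le hxN) (gn_inner_nonneg hx0.le hxN)
          (by simpa using Real.rpow_nonneg hx0.le _)
    _ = x ^ ((1:ℝ)/2 - H) * N ^ (H - 1/2) / (H - 1/2) := by ring
    _ ≤ 2 / (H - 1/2) := div_le_div_of_nonneg_right hratio (by linarith)

end

section
variable {H σ : ℝ}

lemma le_jn (h1 : 1/2 < H) (h2 : H < 3/2) (hσ : 0 ≤ σ) {n i : ℕ} (hi : 1 ≤ i)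
    (hin : i + 1 ≤ n) : σ * cH H * (H - 1/2) * (n : ℝ) ^ (H - 3/2) ≤ jn H σ n i := by
  have hi' : (1:ℝ) ≤ i := by exact_mod_cast hi
  have hin' : (i:ℝ) + 1 ≤ n := by exact_mod_cast hin
  refine mul_le_mul_of_nonneg_left ?_
    (mul_nonneg (mul_nonneg hσ (Real.sqrt_nonneg _)) (by linarith))
  calc (n : ℝ) ^ (H - 3/2) = ∫ _ in (i : ℝ) - 1..i, (n : ℝ) ^ (H - 3/2) := by simp
    _ ≤ _ := intervalIntegral.integral_mono_on_of_le_Ioo (by linarith)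
          intervalIntegrable_const
          (intervalIntegrable_jn_integrand h1 h2 (by linarith) (by linarith) (by linarith)
            (by linarith))
          fun x hx ↦ le_jn_integrand h1.le h2.le (by linarith [hx.1]) (by linarith [hx.2])

lemma le_sum_jn (h1 : 1/2 < H) (h2 : H < 3/2) (hσ : 0 ≤ σ) {n : ℕ} (hn : 2 ≤ n) :
    σ * cH H * (H - 1/2) * (n : ℝ) ^ (H - 1/2) / 2 ≤
      ∑ i ∈ Finset.Icc 1 (n - 1), jn H σ n i := by
  set A := σ * cH H * (H - 1/2)
  have hA : 0 ≤ A := mul_nonneg (mul_nonneg hσ (Real.sqrt_nonneg _)) (by linarith)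
  have hN : (2:ℝ) ≤ n := by exact_mod_cast hn
  have hcard : ((Finset.Icc 1 (n - 1)).card : ℝ) = n - 1 := by
    rw [Nat.card_Icc, Nat.add_sub_cancel, Nat.cast_sub (by omega), Nat.cast_one]
  calc A * (n : ℝ) ^ (H - 1/2) / 2 = A * (n : ℝ) ^ (H - 1/2) * (1 / 2) := by ring
    _ ≤ A * (n : ℝ) ^ (H - 1/2) * ((n - 1) / n) :=
        mul_le_mul_of_nonneg_left (by rw [div_le_div_iff₀ two_pos (by linarith)]; linarith)
          (by positivity)
    _ = (Finset.Icc 1 (n - 1)).card • (A * (n : ℝ) ^ (H - 3/2)) := by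
        rw [nsmul_eq_mul, hcard, show H - 3/2 = H - 1/2 - 1 by ring,
          Real.rpow_sub_one (by positivity)]
        ring
    _ ≤ ∑ i ∈ Finset.Icc 1 (n - 1), jn H σ n i :=
        Finset.card_nsmul_le_sum _ _ _ fun i hi ↦ le_jn h1 h2 hσ (Finset.mem_Icc.1 hi).1
          (by have := (Finset.mem_Icc.1 hi).2; omega)

lemma gn_le (h1 : 1/2 < H) (h2 : H ≤ 3/2) (hσ : 0 ≤ σ) {n : ℕ} (hn : 2 ≤ n) :
    gn H σ n ≤ 2 * σ * cH H := by
  have hN : (2:ℝ) ≤ n := by exact_mod_cast hn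
  calc gn H σ n ≤ σ * cH H * (H - 1/2) * ∫ _ in (n:ℝ) - 1..n, 2 / (H - 1/2) :=
        mul_le_mul_of_nonneg_left (integral_mono_of_nonneg_on_Ioo (by linarith)
          intervalIntegrable_const
          (fun x hx ↦ mul_nonneg (mul_nonneg (Real.rpow_nonneg (by linarith [hx.1]) _)
            (Real.rpow_nonneg (by linarith [hx.2]) _))
            (gn_inner_nonneg (by linarith [hx.1]) hx.2.le))
          fun x hx ↦ gn_integrand_le h1 h2 hN hx.1 hx.2.le)
        (mul_nonneg (mul_nonneg hσ (Real.sqrt_nonneg _)) (by linarith))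
    _ = 2 * σ * cH H := by
        rw [intervalIntegral.integral_const, sub_sub_cancel, one_smul, mul_assoc _ (H - 1/2),
          mul_div_cancel₀ _ (by linarith : H - 1/2 ≠ 0)]
        ring

end

/-- Estimate (3.6): there are `ĉ_* > 0` and `n₂ ≥ 2` such that for all `n ≥ n₂`,
`∑_{i=1}^{n-1} j_n(i) - g_n ≥ ĉ_* n^{H-1/2}`; in particular
`∑_{i=1}^{n-1} j_n(i) ≥ ĉ_* n^{H-1/2}`. -/
theorem sum_jn_lower_bound (H σ : ℝ) (hH : H ∈ Set.Ioo (1/2 : ℝ) 1) (hσ : 0 < σ) :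
    ∃ c : ℝ, 0 < c ∧ ∃ n₂ : ℕ, 2 ≤ n₂ ∧ ∀ n : ℕ, n₂ ≤ n →
      c * (n : ℝ) ^ (H - 1/2) ≤ (∑ i ∈ Finset.Icc 1 (n - 1), jn H σ n i) - gn H σ n ∧
      c * (n : ℝ) ^ (H - 1/2) ≤ ∑ i ∈ Finset.Icc 1 (n - 1), jn H σ n i := by
  obtain ⟨h1, h2⟩ := hH
  have hp : 0 < H - 1/2 := by linarith
  have hc : 0 < σ * cH H := mul_pos hσ (cH_pos (by linarith) h2)
  obtain ⟨n₁, hn₁⟩ := eventually_atTop.1 <|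
    ((tendsto_rpow_atTop hp).comp tendsto_natCast_atTop_atTop).eventually_ge_atTop (8 / (H - 1/2))
  refine ⟨σ * cH H * (H - 1/2) / 4, by positivity, max 2 n₁, le_max_left _ _, fun n hn ↦ ?_⟩
  have hsum := le_sum_jn h1 (by linarith) hσ.le (le_of_max_le_left hn)
  have hgn := gn_le h1 (by linarith) hσ.le (le_of_max_le_left hn)
  have hlarge : 8 ≤ (H - 1/2) * (n : ℝ) ^ (H - 1/2) := by
    rw [← div_le_iff₀' hp]; exact hn₁ n (le_of_max_le_right hn)
  have hgn_small : 2 * σ * cH H ≤ σ * cH H * (H - 1/2) * (n : ℝ) ^ (H - 1/2) / 4 := by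
    nlinarith [mul_le_mul_of_nonneg_left hlarge hc.le]
  constructor <;> linarith
end

section
/- Let N ≥ n₀ ≥ 2 be integers, s₀ > 0, λ ∈ [0,1], and suppose ∑_{i=1}^{k−1} j_k(i) + g_k < N^H for every k ≤ n₀−1 (so that the all-down price S_k^{(N)}(−1,…,−1) is strictly positive for k ≤ n₀−1). Then (1−λ)·S_{n₀−1}^{(N)}(−1,…,−1) − S_{n₀}^{(N)}(−1,…,−1,x) ≥ 0 for both x ∈ {−1,1} if and only if λ ≤ (∑_{i=1}^{n₀−1} j_{n₀}(i) − g_{n₀})/N^H; moreover, whenever this inequality on λ holds, the difference (1−λ)·S_{n₀−1}^{(N)}(−1,…,−1) − S_{n₀}^{(N)}(−1,…,−1,−1) is strictly positive. -/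
open MeasureTheory

/-- The stock price in the `N`-fractional binary market after `n` steps along the
sign path `x` (indexed from 1):
`S_n^{(N)}(x) = s₀ ∏_{k=1}^n (1 + (∑_{i=1}^{k-1} j_k(i) x_i + g_k x_k)/N^H)`. -/
noncomputable def Sp (H σ : ℝ) (N : ℕ) (s₀ : ℝ) (n : ℕ) (x : ℕ → ℝ) : ℝ :=
  s₀ * ∏ k ∈ Finset.Icc 1 n,
    (1 + ((∑ i ∈ Finset.Icc 1 (k - 1), jn H σ k i * x i) + gn H σ k * x k) / (N : ℝ) ^ H)

/-!
Along the all-down path the liquidation value after one more step factors as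
`S_{n₀-1} · ((J - g x) / N^H - λ)` with `J = ∑ j_{n₀}(i)` and `g = g_{n₀}`, and
`S_{n₀-1} > 0` by the hypothesis on the earlier steps. Since `g > 0`, the binding scenario is
`x = 1`, which yields the threshold on `λ`, and `x = -1` then has a strictly larger value.
Positivity of `g` comes from the positivity of its integrand; for `n₀ ≥ 2` that integrand is
bounded on `[n₀ - 1, n₀]`, hence integrable, because the inner base `y (n - x) + x` stays in
`[1, n]` and `y ^ (H - 3/2)` is integrable on `[0, 1]`.
-/

open Real Finset intervalIntegral

lemma cH_pos_s6 {H : ℝ} (hH : H ∈ Set.Ioo (1/2 : ℝ) 1) : 0 < cH H := by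
  obtain ⟨h1, h2⟩ := hH
  have hG1 : 0 < Gamma (3/2 - H) := Gamma_pos_of_pos (by linarith)
  have hG2 : 0 < Gamma (H + 1/2) := Gamma_pos_of_pos (by linarith)
  have hG3 : 0 < Gamma (2 - 2*H) := Gamma_pos_of_pos (by linarith)
  exact sqrt_pos.mpr (div_pos (mul_pos (by linarith) hG1) (mul_pos hG2 hG3))

lemma measurable_intervalIntegral_of_uncurry {F : ℝ → ℝ → ℝ}
    (hF : Measurable (Function.uncurry F)) (a b : ℝ) :
    Measurable fun x => ∫ y in a..b, F x y :=
  (hF.stronglyMeasurable.integral_prod_right (ν := volume.restrict (Set.Ioc a b))).measurable.sub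
    (hF.stronglyMeasurable.integral_prod_right (ν := volume.restrict (Set.Ioc b a))).measurable

section AffineRpowIntegral

variable {p r b x : ℝ}

lemma integral_rpow_zero_one_pos (hr : -1 < r) : 0 < ∫ y in (0:ℝ)..1, y ^ r := by
  rw [integral_rpow (Or.inl hr), one_rpow, zero_rpow (by linarith), sub_zero]
  exact div_pos one_pos (by linarith)

lemma intervalIntegrable_affine_rpow_mul_rpow (hp : 0 ≤ p) (hr : -1 < r) :
    IntervalIntegrable (fun y => (y * b + x) ^ p * y ^ r) volume 0 1 :=
  (intervalIntegrable_rpow' hr).continuousOn_mul <|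
    (by fun_prop : Continuous fun y : ℝ => y * b + x).continuousOn.rpow_const
      fun _ _ => Or.inr hp

lemma integral_rpow_le_integral_affine_rpow_mul_rpow (hp : 0 ≤ p) (hr : -1 < r)
    (hb : 0 ≤ b) (hx : 1 ≤ x) :
    ∫ y in (0:ℝ)..1, y ^ r ≤ ∫ y in (0:ℝ)..1, (y * b + x) ^ p * y ^ r := by
  refine integral_mono_on zero_le_one (intervalIntegrable_rpow' hr)
    (intervalIntegrable_affine_rpow_mul_rpow hp hr) fun y hy => ?_
  have hbase : 1 ≤ y * b + x := by nlinarith [mul_nonneg hy.1 hb]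
  exact le_mul_of_one_le_left (rpow_nonneg hy.1 _) (one_le_rpow hbase hp)

lemma integral_affine_rpow_mul_rpow_le (hp : 0 ≤ p) (hr : -1 < r) (hb : 0 ≤ b) (hx : 0 ≤ x) :
    ∫ y in (0:ℝ)..1, (y * b + x) ^ p * y ^ r ≤ (x + b) ^ p * ∫ y in (0:ℝ)..1, y ^ r := by
  rw [← intervalIntegral.integral_const_mul]
  refine integral_mono_on zero_le_one (intervalIntegrable_affine_rpow_mul_rpow hp hr)
    ((intervalIntegrable_rpow' hr).const_mul _) fun y hy => ?_
  have hbase : y * b + x ≤ x + b := by nlinarith [mul_nonneg (sub_nonneg.mpr hy.2) hb]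
  exact mul_le_mul_of_nonneg_right
    (rpow_le_rpow (by nlinarith [mul_nonneg hy.1 hb]) hbase hp) (rpow_nonneg hy.1 _)

end AffineRpowIntegral

noncomputable def gnIntegrand (H : ℝ) (n : ℕ) (x : ℝ) : ℝ :=
  x ^ ((1:ℝ)/2 - H) * ((n : ℝ) - x) ^ (H - 1/2) *
    ∫ y in (0:ℝ)..1, (y * ((n : ℝ) - x) + x) ^ (H - 1/2) * y ^ (H - 3/2)

section GnIntegrand

variable {H : ℝ} {n : ℕ}

lemma measurable_gnIntegrand : Measurable (gnIntegrand H n) :=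
  (by fun_prop : Measurable fun x : ℝ => x ^ ((1:ℝ)/2 - H) * ((n : ℝ) - x) ^ (H - 1/2)).mul
    (measurable_intervalIntegral_of_uncurry (by fun_prop) 0 1)

lemma gnIntegrand_pos (hH : H ∈ Set.Ioo (1/2 : ℝ) 1) {x : ℝ} (hx₁ : 1 ≤ x) (hxn : x < n) :
    0 < gnIntegrand H n x := by
  have hp : 0 ≤ H - 1/2 := by linarith [hH.1]
  have hr : -1 < H - 3/2 := by linarith [hH.1]
  have hinner := (integral_rpow_zero_one_pos hr).trans_le
    (integral_rpow_le_integral_affine_rpow_mul_rpow hp hr (sub_nonneg.mpr hxn.le) hx₁)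
  have hA := rpow_pos_of_pos (by linarith : 0 < x) ((1:ℝ)/2 - H)
  have hB := rpow_pos_of_pos (sub_pos.mpr hxn) (H - 1/2)
  exact mul_pos (mul_pos hA hB) hinner

lemma abs_gnIntegrand_le (hH : H ∈ Set.Ioo (1/2 : ℝ) 1) {x : ℝ} (hx : x ∈ Set.Icc ((n:ℝ) - 1) n)
    (hn : 1 ≤ (n:ℝ) - 1) :
    |gnIntegrand H n x| ≤ (n:ℝ) ^ (H - 1/2) * ∫ y in (0:ℝ)..1, y ^ (H - 3/2) := by
  obtain ⟨hx₁, hxn⟩ := hx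
  have hp : 0 ≤ H - 1/2 := by linarith [hH.1]
  have hr : -1 < H - 3/2 := by linarith [hH.1]
  have hb : 0 ≤ (n:ℝ) - x := sub_nonneg.mpr hxn
  have hinner_nonneg := (integral_rpow_zero_one_pos hr).le.trans
    (integral_rpow_le_integral_affine_rpow_mul_rpow hp hr hb (by linarith : (1:ℝ) ≤ x))
  have hinner_le := integral_affine_rpow_mul_rpow_le hp hr hb (by linarith : 0 ≤ x)
  rw [add_sub_cancel] at hinner_le
  have hA : x ^ ((1:ℝ)/2 - H) ≤ 1 := rpow_le_one_of_one_le_of_nonpos (by linarith) (by linarith)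
  have hB : ((n:ℝ) - x) ^ (H - 1/2) ≤ 1 := rpow_le_one hb (by linarith) hp
  unfold gnIntegrand
  have hB₀ : 0 ≤ ((n:ℝ) - x) ^ (H - 1/2) := rpow_nonneg hb _
  rw [abs_of_nonneg (mul_nonneg (mul_nonneg (rpow_nonneg (by linarith) _) hB₀) hinner_nonneg)]
  calc _ ≤ 1 * ((n:ℝ) ^ (H - 1/2) * ∫ y in (0:ℝ)..1, y ^ (H - 3/2)) :=
        mul_le_mul (mul_le_one₀ hA hB₀ hB) hinner_le hinner_nonneg zero_le_one
    _ = _ := one_mul _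

end GnIntegrand

lemma gn_pos {H σ : ℝ} (hH : H ∈ Set.Ioo (1/2 : ℝ) 1) (hσ : 0 < σ) {n : ℕ} (hn : 2 ≤ n) :
    0 < gn H σ n := by
  have hn' : 1 ≤ (n:ℝ) - 1 := by
    have : (2:ℝ) ≤ n := by exact_mod_cast hn
    linarith
  have hint : IntervalIntegrable (gnIntegrand H n) volume ((n:ℝ) - 1) n := by
    rw [intervalIntegrable_iff_integrableOn_Icc_of_le (by linarith)]
    refine Integrable.mono'
      (integrable_const ((n:ℝ) ^ (H - 1/2) * ∫ y in (0:ℝ)..1, y ^ (H - 3/2)))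
      measurable_gnIntegrand.aestronglyMeasurable ?_
    filter_upwards [ae_restrict_mem measurableSet_Icc] with x hx
    exact abs_gnIntegrand_le hH hx hn'
  have hpos : 0 < ∫ x in ((n:ℝ) - 1)..n, gnIntegrand H n x :=
    intervalIntegral_pos_of_pos_on hint (fun x hx => gnIntegrand_pos hH (by linarith [hx.1]) hx.2)
      (by linarith)
  have hC : 0 < σ * cH H * (H - 1/2) := mul_pos (mul_pos hσ (cH_pos_s6 hH)) (by linarith [hH.1])
  exact mul_pos hC hpos

section Market

variable {H σ : ℝ} {N : ℕ} {s₀ : ℝ}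

lemma Sp_succ (n : ℕ) (x : ℕ → ℝ) :
    Sp H σ N s₀ (n + 1) x = Sp H σ N s₀ n x *
      (1 + ((∑ i ∈ Icc 1 n, jn H σ (n + 1) i * x i) + gn H σ (n + 1) * x (n + 1)) /
        (N : ℝ) ^ H) := by
  rw [Sp, Sp, prod_Icc_succ_top (by omega), Nat.add_sub_cancel, mul_assoc]

lemma Sp_congr {n : ℕ} {x y : ℕ → ℝ} (h : ∀ i ∈ Icc 1 n, x i = y i) :
    Sp H σ N s₀ n x = Sp H σ N s₀ n y := by
  unfold Sp
  refine congrArg _ (prod_congr rfl fun k hk => ?_)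
  have hsum : ∑ i ∈ Icc 1 (k - 1), jn H σ k i * x i = ∑ i ∈ Icc 1 (k - 1), jn H σ k i * y i :=
    sum_congr rfl fun i hi => by
      rw [h i (mem_Icc.mpr ⟨(mem_Icc.mp hi).1, by grind⟩)]
  rw [hsum, h k hk]

lemma Sp_allDown_pos (hs₀ : 0 < s₀) (n : ℕ)
    (h : ∀ k ∈ Icc 1 n, (∑ i ∈ Icc 1 (k - 1), jn H σ k i) + gn H σ k < (N : ℝ) ^ H) :
    0 < Sp H σ N s₀ n (fun _ => -1) := by
  refine mul_pos hs₀ (prod_pos fun k hk => ?_)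
  have hlt : ((∑ i ∈ Icc 1 (k - 1), jn H σ k i) + gn H σ k) / (N : ℝ) ^ H < 1 := by
    rcases (rpow_nonneg (Nat.cast_nonneg N) H).eq_or_lt with hP | hP
    · -- with `N ^ H = 0` the step factor is `1`, as Lean divides by zero to `0`
      rw [← hP, div_zero]
      exact one_pos
    · exact (div_lt_one hP).mpr (h k hk)
  simp only [mul_neg_one, sum_neg_distrib]
  rw [← neg_add, neg_div]
  linarith

lemma Sp_allDown_step (n : ℕ) (x : ℝ) :
    Sp H σ N s₀ (n + 1) (fun i => if i = n + 1 then x else -1) =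
      Sp H σ N s₀ n (fun _ => -1) *
        (1 + (gn H σ (n + 1) * x - ∑ i ∈ Icc 1 n, jn H σ (n + 1) i) / (N : ℝ) ^ H) := by
  have hpast : ∀ i ∈ Icc 1 n, (if i = n + 1 then x else -1) = (-1 : ℝ) := fun i hi =>
    if_neg (by grind)
  rw [Sp_succ, Sp_congr hpast, sum_congr rfl fun i hi => by rw [hpast i hi], if_pos rfl]
  simp only [mul_neg_one, sum_neg_distrib]
  ring

end Market

theorem one_step_arbitrage_characterization_general (H σ : ℝ) (hH : H ∈ Set.Ioo (1/2 : ℝ) 1)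
    (hσ : 0 < σ) (N n₀ : ℕ) (hn₀ : 2 ≤ n₀) (hN : n₀ ≤ N) (s₀ : ℝ) (hs₀ : 0 < s₀)
    (lam : ℝ)
    (hpos : ∀ k : ℕ, 1 ≤ k → k ≤ n₀ - 1 →
      (∑ i ∈ Finset.Icc 1 (k - 1), jn H σ k i) + gn H σ k < (N : ℝ) ^ H) :
    ((∀ x : ℝ, x = -1 ∨ x = 1 →
        0 ≤ (1 - lam) * Sp H σ N s₀ (n₀ - 1) (fun _ => -1)
            - Sp H σ N s₀ n₀ (fun i => if i = n₀ then x else -1)) ↔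
      lam ≤ ((∑ i ∈ Finset.Icc 1 (n₀ - 1), jn H σ n₀ i) - gn H σ n₀) / (N : ℝ) ^ H) ∧
    (lam ≤ ((∑ i ∈ Finset.Icc 1 (n₀ - 1), jn H σ n₀ i) - gn H σ n₀) / (N : ℝ) ^ H →
      0 < (1 - lam) * Sp H σ N s₀ (n₀ - 1) (fun _ => -1)
          - Sp H σ N s₀ n₀ (fun _ => -1)) := by
  obtain ⟨n, rfl⟩ : ∃ n, n₀ = n + 1 := ⟨n₀ - 1, by omega⟩
  rw [Nat.add_sub_cancel] at hpos ⊢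
  have hS : 0 < Sp H σ N s₀ n (fun _ => -1) :=
    Sp_allDown_pos hs₀ n fun k hk => hpos k (mem_Icc.mp hk).1 (mem_Icc.mp hk).2
  have hg : 0 < gn H σ (n + 1) := gn_pos hH hσ hn₀
  have hP : 0 < (N : ℝ) ^ H := rpow_pos_of_pos (by exact_mod_cast (by omega : 0 < N)) H
  have hvalue : ∀ x : ℝ, (1 - lam) * Sp H σ N s₀ n (fun _ => -1) -
      Sp H σ N s₀ (n + 1) (fun i => if i = n + 1 then x else -1) =
      Sp H σ N s₀ n (fun _ => -1) *
        (((∑ i ∈ Icc 1 n, jn H σ (n + 1) i) - gn H σ (n + 1) * x) / (N : ℝ) ^ H - lam) := by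
    intro x
    rw [Sp_allDown_step]
    field_simp
    ring
  have hup := hvalue 1
  rw [mul_one] at hup
  have hdown := hvalue (-1)
  simp only [ite_self, mul_neg_one, sub_neg_eq_add] at hdown
  have hgap : ((∑ i ∈ Icc 1 n, jn H σ (n + 1) i) - gn H σ (n + 1)) / (N : ℝ) ^ H <
      ((∑ i ∈ Icc 1 n, jn H σ (n + 1) i) + gn H σ (n + 1)) / (N : ℝ) ^ H :=
    div_lt_div_of_pos_right (by linarith) hP
  refine ⟨⟨fun h => ?_, fun hl x hx => ?_⟩, fun hl => ?_⟩
  · have hnonneg := h 1 (Or.inr rfl)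
    rw [hup] at hnonneg
    linarith [(mul_nonneg_iff_of_pos_left hS).mp hnonneg]
  · rcases hx with rfl | rfl
    · rw [hvalue, mul_neg_one, sub_neg_eq_add]
      exact mul_nonneg hS.le (by linarith)
    · rw [hup]
      exact mul_nonneg hS.le (by linarith)
  · rw [hdown]
    exact mul_pos hS (by linarith)

/-- Characterization of the 1-step arbitrage with transaction costs `λ` on the all-down
path: the liquidation value at time `n₀` is nonnegative in both scenarios iff
`λ ≤ (∑_{i=1}^{n₀-1} j_{n₀}(i) - g_{n₀})/N^H`, and in that case the value is strictly
positive on the all-down continuation. -/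
theorem one_step_arbitrage_characterization (H σ : ℝ) (hH : H ∈ Set.Ioo (1/2 : ℝ) 1)
    (hσ : 0 < σ) (N n₀ : ℕ) (hn₀ : 2 ≤ n₀) (hN : n₀ ≤ N) (s₀ : ℝ) (hs₀ : 0 < s₀)
    (lam : ℝ) (hlam : lam ∈ Set.Icc (0:ℝ) 1)
    (hpos : ∀ k : ℕ, 1 ≤ k → k ≤ n₀ - 1 →
      (∑ i ∈ Finset.Icc 1 (k - 1), jn H σ k i) + gn H σ k < (N : ℝ) ^ H) :
    ((∀ x : ℝ, x = -1 ∨ x = 1 →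
        0 ≤ (1 - lam) * Sp H σ N s₀ (n₀ - 1) (fun _ => -1)
            - Sp H σ N s₀ n₀ (fun i => if i = n₀ then x else -1)) ↔
      lam ≤ ((∑ i ∈ Finset.Icc 1 (n₀ - 1), jn H σ n₀ i) - gn H σ n₀) / (N : ℝ) ^ H) ∧
    (lam ≤ ((∑ i ∈ Finset.Icc 1 (n₀ - 1), jn H σ n₀ i) - gn H σ n₀) / (N : ℝ) ^ H →
      0 < (1 - lam) * Sp H σ N s₀ (n₀ - 1) (fun _ => -1)
          - Sp H σ N s₀ n₀ (fun _ => -1)) :=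
  one_step_arbitrage_characterization_general H σ hH hσ N n₀ hn₀ hN s₀ hs₀ lam hpos
end

section
/- Let α := H − 1/2 ∈ (0,1/2) and define G : (0,1) → ℝ by G(z) := ∫_0^z v^{−α}(1−v)^{α} dv − (1−z)^{α}·z^{1−α}. Then G is strictly increasing on (0,1), G(z) → 0 as z → 0⁺, and consequently G(z) > 0 for every z ∈ (0,1). -/
/-!
The derivative `z^{-α}(1-z)^α` of the integral combines with that of the product term to
`G'(z) = α z^{-α} (1-z)^{α-1} > 0` on `(0,1)`. Since `G` extends continuously to `0` with
`G(0) = 0`, strict monotonicity then forces `G > 0` on `(0,1)`.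
-/

open MeasureTheory

/-- The function `G(z) = ∫_0^z v^{-α}(1-v)^α dv - (1-z)^α z^{1-α}`. -/
noncomputable def Gfun (α : ℝ) (z : ℝ) : ℝ :=
  (∫ v in (0:ℝ)..z, v ^ (-α) * (1 - v) ^ α) - (1 - z) ^ α * z ^ (1 - α)

open Set Filter Topology

theorem StrictMonoOn.lt_of_tendsto_nhdsGT {X Y : Type*} [LinearOrder X] [TopologicalSpace X]
    [OrderTopology X] [DenselyOrdered X] [LinearOrder Y] [TopologicalSpace Y]
    [OrderClosedTopology Y] {f : X → Y} {a b : X} {c : Y} (hf : StrictMonoOn f (Ioo a b))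
    (hlim : Tendsto f (𝓝[>] a) (𝓝 c)) {z : X} (hz : z ∈ Ioo a b) : c < f z := by
  obtain ⟨w, haw, hwz⟩ := exists_between hz.1
  have hw : w ∈ Ioo a b := ⟨haw, hwz.trans hz.2⟩
  have : (𝓝[>] a).NeBot := nhdsGT_neBot_of_exists_gt ⟨w, haw⟩
  have hcw : c ≤ f w := by
    refine le_of_tendsto hlim ?_
    filter_upwards [Ioo_mem_nhdsGT haw] with x hx
    exact (hf ⟨hx.1, hx.2.trans hw.2⟩ hw hx.2).le
  exact hcw.trans_lt (hf hw hz hwz)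

section

variable {α : ℝ}

theorem integrableOn_rpow_neg_mul_one_sub_rpow (hα0 : 0 ≤ α) (hα1 : α < 1) :
    IntegrableOn (fun v : ℝ => v ^ (-α) * (1 - v) ^ α) (Icc 0 1) := by
  rw [integrableOn_Icc_iff_integrableOn_Ioc]
  have hdom : IntegrableOn (fun v : ℝ => v ^ (-α)) (Ioc 0 1) :=
    (intervalIntegral.intervalIntegrable_rpow' (by linarith)).1
  refine hdom.mono' (by fun_prop) ?_
  filter_upwards [ae_restrict_mem measurableSet_Ioc] with v ⟨hv0, hv1⟩
  have h1v : 0 ≤ 1 - v := by linarith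
  rw [Real.norm_of_nonneg (by positivity)]
  exact mul_le_of_le_one_right (by positivity) (Real.rpow_le_one h1v (by linarith) hα0)

theorem Gfun_zero (hα1 : α < 1) : Gfun α 0 = 0 := by
  simp [Gfun, Real.zero_rpow (by linarith : 1 - α ≠ 0)]

theorem continuousWithinAt_Gfun_zero (hα0 : 0 ≤ α) (hα1 : α < 1) :
    ContinuousWithinAt (Gfun α) (Icc 0 1) 0 := by
  have hprim : ContinuousOn (fun x => ∫ v in (0:ℝ)..x, v ^ (-α) * (1 - v) ^ α) (Icc 0 1) := by
    simpa [uIcc_of_le zero_le_one] using intervalIntegral.continuousOn_primitive_interval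
      (a := 0) (b := 1) (by simpa [uIcc_of_le zero_le_one] using
        integrableOn_rpow_neg_mul_one_sub_rpow hα0 hα1)
  refine (hprim 0 ⟨le_rfl, zero_le_one⟩).sub (ContinuousAt.continuousWithinAt ?_)
  exact ((continuous_const.sub continuous_id).continuousAt.rpow_const (by simp)).mul
    (Real.continuousAt_rpow_const 0 _ (Or.inr (by linarith)))

theorem hasDerivAt_Gfun (hα0 : 0 ≤ α) (hα1 : α < 1) {z : ℝ} (hz : z ∈ Ioo (0:ℝ) 1) :
    HasDerivAt (Gfun α) (α * z ^ (-α) * (1 - z) ^ (α - 1)) z := by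
  obtain ⟨hz0, hz1⟩ := hz
  have h1z : 0 < 1 - z := by linarith
  have hint : HasDerivAt (fun u => ∫ v in (0:ℝ)..u, v ^ (-α) * (1 - v) ^ α)
      (z ^ (-α) * (1 - z) ^ α) z := by
    refine intervalIntegral.integral_hasDerivAt_right ?_
      (by fun_prop : Measurable _).aestronglyMeasurable.stronglyMeasurableAtFilter ?_
    · exact ((integrableOn_rpow_neg_mul_one_sub_rpow hα0 hα1).mono_set
        (by rw [uIcc_of_le hz0.le]; exact Icc_subset_Icc_right hz1.le)).intervalIntegrable
    · exact (Real.continuousAt_rpow_const z _ (Or.inl hz0.ne')).mul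
        ((continuous_const.sub continuous_id).continuousAt.rpow_const (Or.inl h1z.ne'))
  have hprod : HasDerivAt (fun z : ℝ => (1 - z) ^ α * z ^ (1 - α))
      (-(α * (1 - z) ^ (α - 1)) * z ^ (1 - α) + (1 - z) ^ α * ((1 - α) * z ^ (1 - α - 1))) z := by
    have hleft : HasDerivAt (fun z : ℝ => (1 - z) ^ α) (-(α * (1 - z) ^ (α - 1))) z := by
      simpa using ((hasDerivAt_id z).const_sub 1).rpow_const (p := α) (Or.inl h1z.ne')
    exact hleft.mul (Real.hasDerivAt_rpow_const (Or.inl hz0.ne'))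
  refine (hint.sub hprod).congr_deriv ?_
  have hz_pow : z ^ (1 - α) = z * z ^ (-α) := by
    rw [sub_eq_add_neg, Real.rpow_add hz0, Real.rpow_one]
  have h1z_pow : (1 - z) ^ α = (1 - z) * (1 - z) ^ (α - 1) := calc
    (1 - z) ^ α = (1 - z) ^ (1 + (α - 1)) := by ring_nf
    _ = (1 - z) * (1 - z) ^ (α - 1) := by rw [Real.rpow_add h1z, Real.rpow_one]
  rw [show 1 - α - 1 = -α by ring, hz_pow, h1z_pow]
  ring

theorem strictMonoOn_Gfun (hα0 : 0 < α) (hα1 : α < 1) :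
    StrictMonoOn (Gfun α) (Ioo 0 1) := by
  refine strictMonoOn_of_deriv_pos (convex_Ioo 0 1)
    (fun z hz => (hasDerivAt_Gfun hα0.le hα1 hz).continuousAt.continuousWithinAt) ?_
  intro z hz
  rw [interior_Ioo] at hz
  rw [(hasDerivAt_Gfun hα0.le hα1 hz).deriv]
  obtain ⟨hz0, hz1⟩ := hz
  have h1z : 0 < 1 - z := by linarith
  positivity

theorem tendsto_Gfun_nhdsGT_zero (hα0 : 0 ≤ α) (hα1 : α < 1) :
    Tendsto (Gfun α) (𝓝[>] 0) (𝓝 0) := by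
  have hcont := (continuousWithinAt_Icc_iff_Ici zero_lt_one).1
    (continuousWithinAt_Gfun_zero hα0 hα1)
  simpa [Gfun_zero hα1] using (hcont.mono Ioi_subset_Ici_self).tendsto

end

/-- With `α = H - 1/2 ∈ (0,1/2)`, the function `G` is strictly increasing on `(0,1)`,
tends to `0` as `z → 0⁺`, and hence is strictly positive on `(0,1)`. -/
theorem Gfun_properties (H : ℝ) (hH : H ∈ Set.Ioo (1/2 : ℝ) 1) :
    StrictMonoOn (Gfun (H - 1/2)) (Set.Ioo (0:ℝ) 1) ∧
    Filter.Tendsto (Gfun (H - 1/2)) (nhdsWithin 0 (Set.Ioi (0:ℝ))) (nhds 0) ∧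
    ∀ z ∈ Set.Ioo (0:ℝ) 1, 0 < Gfun (H - 1/2) z := by
  have hα0 : 0 < H - 1/2 := by linarith [hH.1]
  have hα1 : H - 1/2 < 1 := by linarith [hH.2]
  have hmono := strictMonoOn_Gfun hα0 hα1
  have hlim := tendsto_Gfun_nhdsGT_zero hα0.le hα1
  exact ⟨hmono, hlim, fun z hz => hmono.lt_of_tendsto_nhdsGT hlim hz⟩
end

section
/- Let γ ∈ (0,1), α := H−1/2, and let N ≥ 2 be an integer with ⌊γN⌋ ≥ 1. For every integer k ≥ 1 one has ∑_{i=⌊γN⌋+1}^{⌊γN⌋+k−1} j_{⌊γN⌋+k}(i) ≤ c_* · ((⌊γN⌋+k)^{α}/⌊γN⌋^{α}) · k^{α}, where c_* := σ·c_H and the sum is empty (equal to 0) when k = 1. -/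
/-!
For `x ∈ [i-1, i] ⊆ [m, n-1]` (with `m = ⌊γN⌋`, `n = m + k`, `α = H - 1/2`) bound
`x^{-α} ≤ m^{-α}` and `(v + n - 1)^α ≤ n^α`; the remaining `v`-integral is explicit, so
`j_n(i) ≤ σ c_H (n/m)^α ∫_{i-1}^{i} ((n-x)^α - (n-1-x)^α) dx`. Summing over `i` glues these into
one integral over `[m, n-1]`, which after substitution is `∫_1^k u^α - ∫_0^{k-1} u^α`
`= ∫_{k-1}^k u^α - ∫_0^1 u^α ≤ k^α`.
-/

open MeasureTheory

open Set

lemma intervalIntegral.integral_mono_of_nonneg_on {f g : ℝ → ℝ} {a b : ℝ} (hab : a ≤ b)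
    (hg : IntervalIntegrable g volume a b) (hf : ∀ x ∈ Ioc a b, 0 ≤ f x)
    (hfg : ∀ x ∈ Ioc a b, f x ≤ g x) :
    ∫ x in a..b, f x ≤ ∫ x in a..b, g x := by
  rw [intervalIntegral.integral_of_le hab, intervalIntegral.integral_of_le hab]
  exact integral_mono_of_nonneg (ae_restrict_of_forall_mem measurableSet_Ioc hf) hg.1
    (ae_restrict_of_forall_mem measurableSet_Ioc hfg)

lemma sum_integral_Icc_eq_integral {f : ℝ → ℝ} (hf : ∀ a b, IntervalIntegrable f volume a b)
    {a b : ℕ} (hab : a ≤ b) :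
    ∑ i ∈ Finset.Icc (a + 1) b, ∫ x in (i - 1 : ℝ)..i, f x = ∫ x in (a : ℝ)..b, f x := by
  induction b, hab using Nat.le_induction with
  | base => simp
  | succ b hab ih =>
    rw [Finset.sum_Icc_succ_top (by omega), ih, Nat.cast_add_one, add_sub_cancel_right,
      intervalIntegral.integral_add_adjacent_intervals (hf _ _) (hf _ _)]

section RpowIntegrals

variable {α : ℝ}

lemma integral_add_rpow_sub_one (hα : 0 < α) (c : ℝ) :
    ∫ v in (0 : ℝ)..1, (v + c) ^ (α - 1) = ((1 + c) ^ α - c ^ α) / α := by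
  rw [intervalIntegral.integral_comp_add_right (· ^ (α - 1)) c,
    integral_rpow (Or.inl (by linarith)), sub_add_cancel, zero_add]

lemma integral_rpow_mul_rpow_sub_one_nonneg {n x : ℝ} (hn : 1 ≤ n) (hx : x ≤ n - 1) :
    0 ≤ ∫ v in (0 : ℝ)..1, (v + n - 1) ^ α * (v + n - 1 - x) ^ (α - 1) :=
  intervalIntegral.integral_nonneg zero_le_one fun v hv =>
    mul_nonneg (Real.rpow_nonneg (by linarith [hv.1]) _) (Real.rpow_nonneg (by linarith [hv.1]) _)

lemma integral_rpow_mul_rpow_sub_one_le (hα : 0 < α) {n x : ℝ} (hn : 1 ≤ n) (hx : x ≤ n - 1) :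
    ∫ v in (0 : ℝ)..1, (v + n - 1) ^ α * (v + n - 1 - x) ^ (α - 1)
      ≤ n ^ α * (((n - x) ^ α - (n - 1 - x) ^ α) / α) := by
  have hint : IntervalIntegrable (fun v => (v + (n - 1 - x)) ^ (α - 1)) volume 0 1 := by
    simpa using (intervalIntegral.intervalIntegrable_rpow' (a := n - 1 - x) (b := 1 + (n - 1 - x))
      (by linarith : -1 < α - 1)).comp_add_right (n - 1 - x)
  calc ∫ v in (0 : ℝ)..1, (v + n - 1) ^ α * (v + n - 1 - x) ^ (α - 1)
      ≤ ∫ v in (0 : ℝ)..1, n ^ α * (v + (n - 1 - x)) ^ (α - 1) := by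
        refine intervalIntegral.integral_mono_of_nonneg_on zero_le_one (hint.const_mul _)
          (fun v hv => ?_) (fun v hv => ?_)
        · exact mul_nonneg (Real.rpow_nonneg (by linarith [hv.1]) _)
            (Real.rpow_nonneg (by linarith [hv.1]) _)
        · rw [← add_sub_assoc, ← add_sub_assoc]
          exact mul_le_mul_of_nonneg_right
            (Real.rpow_le_rpow (by linarith [hv.1]) (by linarith [hv.2]) hα.le)
            (Real.rpow_nonneg (by linarith [hv.1]) _)
    _ = n ^ α * (((n - x) ^ α - (n - 1 - x) ^ α) / α) := by
        rw [intervalIntegral.integral_const_mul, integral_add_rpow_sub_one hα]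
        ring_nf

lemma integral_one_rpow_sub_integral_zero_rpow_le (hα : 0 ≤ α) {k : ℝ} (hk : 1 ≤ k) :
    (∫ u in (1 : ℝ)..k, u ^ α) - ∫ u in (0 : ℝ)..(k - 1), u ^ α ≤ k ^ α := by
  have hint : ∀ a b : ℝ, IntervalIntegrable (· ^ α) volume a b := fun a b =>
    intervalIntegral.intervalIntegrable_rpow' (by linarith)
  have hsplit : (∫ u in (1 : ℝ)..k, u ^ α) - ∫ u in (0 : ℝ)..(k - 1), u ^ α
      = (∫ u in (k - 1)..k, u ^ α) - ∫ u in (0 : ℝ)..1, u ^ α := by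
    have h1 := intervalIntegral.integral_add_adjacent_intervals (hint 0 1) (hint 1 k)
    have h2 := intervalIntegral.integral_add_adjacent_intervals (hint 0 (k - 1)) (hint (k - 1) k)
    linarith
  have hhead : 0 ≤ ∫ u in (0 : ℝ)..1, u ^ α :=
    intervalIntegral.integral_nonneg zero_le_one fun u hu => Real.rpow_nonneg hu.1 _
  have htail : ∫ u in (k - 1)..k, u ^ α ≤ ∫ _ in (k - 1)..k, k ^ α :=
    intervalIntegral.integral_mono_on (by linarith) (hint _ _) intervalIntegrable_const
      fun u hu => Real.rpow_le_rpow (by linarith [hu.1]) hu.2 hα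
  rw [intervalIntegral.integral_const, sub_sub_cancel, one_smul] at htail
  linarith

lemma integral_rpow_sub_rpow_le (hα : 0 ≤ α) (m : ℝ) {k : ℝ} (hk : 1 ≤ k) :
    ∫ x in m..(m + k - 1), ((m + k - x) ^ α - (m + k - 1 - x) ^ α) ≤ k ^ α := by
  rw [intervalIntegral.integral_sub ((by fun_prop : Continuous _).intervalIntegrable _ _)
      ((by fun_prop : Continuous _).intervalIntegrable _ _),
    intervalIntegral.integral_comp_sub_left (· ^ α) (m + k),
    intervalIntegral.integral_comp_sub_left (· ^ α) (m + k - 1),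
    show m + k - (m + k - 1) = 1 by ring, add_sub_cancel_left, sub_self,
    show m + k - 1 - m = k - 1 by ring]
  exact integral_one_rpow_sub_integral_zero_rpow_le hα hk

lemma rpow_neg_mul_integral_le (hα : 0 < α) {m n x : ℝ} (hm : 0 < m) (hmx : m ≤ x)
    (hxn : x ≤ n - 1) :
    x ^ (-α) * ∫ v in (0 : ℝ)..1, (v + n - 1) ^ α * (v + n - 1 - x) ^ (α - 1)
      ≤ (m ^ α)⁻¹ * (n ^ α * (((n - x) ^ α - (n - 1 - x) ^ α) / α)) := by
  have hxm : x ^ (-α) ≤ (m ^ α)⁻¹ := by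
    rw [← Real.rpow_neg hm.le]
    exact Real.rpow_le_rpow_of_nonpos hm hmx (by linarith)
  exact mul_le_mul hxm (integral_rpow_mul_rpow_sub_one_le hα (by linarith) hxn)
    (integral_rpow_mul_rpow_sub_one_nonneg (by linarith) hxn) (by positivity)

end RpowIntegrals

lemma jn_le_mul_integral (H σ : ℝ) (hH : 1 / 2 < H) (hσ : 0 ≤ σ) {m n i : ℕ} (hm : 0 < m)
    (hmi : m < i) (hin : i < n) :
    jn H σ n i ≤ σ * cH H * ((n : ℝ) ^ (H - 1/2) / (m : ℝ) ^ (H - 1/2)) *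
      ∫ x in ((i : ℝ) - 1)..i, (((n : ℝ) - x) ^ (H - 1/2) - ((n : ℝ) - 1 - x) ^ (H - 1/2)) := by
  have hm' : (0 : ℝ) < m := by exact_mod_cast hm
  have hmi' : (m : ℝ) + 1 ≤ i := by exact_mod_cast hmi
  have hin' : (i : ℝ) + 1 ≤ n := by exact_mod_cast hin
  have hα : 0 < H - 1/2 := by linarith
  have hc : 0 ≤ σ * cH H * (H - 1/2) := mul_nonneg (mul_nonneg hσ (Real.sqrt_nonneg _)) hα.le
  unfold jn
  rw [show H - 3/2 = H - 1/2 - 1 by ring, show (1 : ℝ)/2 - H = -(H - 1/2) by ring]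
  set α := H - 1/2
  have hcont : Continuous (· ^ α : ℝ → ℝ) := Real.continuous_rpow_const hα.le
  calc σ * cH H * α * ∫ x in ((i : ℝ) - 1)..i,
        x ^ (-α) * ∫ v in (0 : ℝ)..1, (v + n - 1) ^ α * (v + n - 1 - x) ^ (α - 1)
      ≤ σ * cH H * α * ∫ x in ((i : ℝ) - 1)..i, ((m : ℝ) ^ α)⁻¹ *
          ((n : ℝ) ^ α * ((((n : ℝ) - x) ^ α - ((n : ℝ) - 1 - x) ^ α) / α)) := by
        refine mul_le_mul_of_nonneg_left
          (intervalIntegral.integral_mono_of_nonneg_on (by linarith)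
            ((by fun_prop : Continuous _).intervalIntegrable _ _)
            (fun x hx => ?_) (fun x hx => ?_)) hc
        · exact mul_nonneg (Real.rpow_nonneg (by linarith [hx.1]) _)
            (integral_rpow_mul_rpow_sub_one_nonneg (by linarith) (by linarith [hx.2]))
        · exact rpow_neg_mul_integral_le hα hm' (by linarith [hx.1]) (by linarith [hx.2])
    _ = _ := by
        rw [intervalIntegral.integral_const_mul, intervalIntegral.integral_const_mul,
          intervalIntegral.integral_div]
        field_simp

theorem sum_jn_gamma_upper_general (H σ : ℝ) (hH : H ∈ Set.Ioo (1/2 : ℝ) 1) (hσ : 0 < σ)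
    (γ : ℝ) (N : ℕ) (hfloor : 1 ≤ ⌊γ * N⌋₊)
    (k : ℕ) (hk : 1 ≤ k) :
    ∑ i ∈ Finset.Icc (⌊γ * N⌋₊ + 1) (⌊γ * N⌋₊ + k - 1), jn H σ (⌊γ * N⌋₊ + k) i
      ≤ σ * cH H * (((⌊γ * N⌋₊ : ℝ) + k) ^ (H - 1/2) / (⌊γ * N⌋₊ : ℝ) ^ (H - 1/2))
          * (k : ℝ) ^ (H - 1/2) := by
  set m := ⌊γ * N⌋₊
  set C := σ * cH H * (((m : ℝ) + k) ^ (H - 1/2) / (m : ℝ) ^ (H - 1/2))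
  have hα : 0 ≤ H - 1/2 := by linarith [hH.1]
  have hC : 0 ≤ C := by unfold C cH; positivity
  calc ∑ i ∈ Finset.Icc (m + 1) (m + k - 1), jn H σ (m + k) i
      ≤ ∑ i ∈ Finset.Icc (m + 1) (m + k - 1), C * ∫ x in ((i : ℝ) - 1)..i,
          (((m : ℝ) + k - x) ^ (H - 1/2) - ((m : ℝ) + k - 1 - x) ^ (H - 1/2)) := by
        refine Finset.sum_le_sum fun i hi => ?_
        rw [Finset.mem_Icc] at hi
        have hi' := jn_le_mul_integral H σ hH.1 hσ.le (n := m + k) (i := i) hfloor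
          (by omega) (by omega)
        push_cast at hi'
        exact hi'
    _ = C * ∫ x in (m : ℝ)..(m + k - 1),
          (((m : ℝ) + k - x) ^ (H - 1/2) - ((m : ℝ) + k - 1 - x) ^ (H - 1/2)) := by
        rw [← Finset.mul_sum, sum_integral_Icc_eq_integral
          (fun a b => (by fun_prop : Continuous _).intervalIntegrable a b) (by omega),
          Nat.cast_sub (by omega)]
        push_cast
        rfl
    _ ≤ C * (k : ℝ) ^ (H - 1/2) :=
        mul_le_mul_of_nonneg_left (integral_rpow_sub_rpow_le hα _ (by exact_mod_cast hk)) hC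

/-- Estimate (4.6) (`sum2`): for `γ ∈ (0,1)`, `N ≥ 2` with `⌊γN⌋ ≥ 1` and `k ≥ 1`,
`∑_{i=⌊γN⌋+1}^{⌊γN⌋+k-1} j_{⌊γN⌋+k}(i) ≤ c_* ((⌊γN⌋+k)^α / ⌊γN⌋^α) k^α`
with `α = H - 1/2` and `c_* = σ c_H`. -/
theorem sum_jn_gamma_upper (H σ : ℝ) (hH : H ∈ Set.Ioo (1/2 : ℝ) 1) (hσ : 0 < σ)
    (γ : ℝ) (hγ : γ ∈ Set.Ioo (0:ℝ) 1) (N : ℕ) (hN : 2 ≤ N) (hfloor : 1 ≤ ⌊γ * N⌋₊)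
    (k : ℕ) (hk : 1 ≤ k) :
    ∑ i ∈ Finset.Icc (⌊γ * N⌋₊ + 1) (⌊γ * N⌋₊ + k - 1), jn H σ (⌊γ * N⌋₊ + k) i
      ≤ σ * cH H * (((⌊γ * N⌋₊ : ℝ) + k) ^ (H - 1/2) / (⌊γ * N⌋₊ : ℝ) ^ (H - 1/2))
          * (k : ℝ) ^ (H - 1/2) :=
  sum_jn_gamma_upper_general H σ hH hσ γ N hfloor k hk
end

section
/- Let c_X := σ·c_H/(3/2 − H) + σ·c_H/(H + 1/2). Then for every integer n ≥ 2 and every sign vector (x_1,…,x_n) ∈ {−1,1}^n one has |∑_{i=1}^{n−1} j_n(i)·x_i + g_n·x_n| ≤ c_X · n^{H−1/2}. -/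
open MeasureTheory

/-!
Write `p = H - 1/2`. In `j_n(i)` the factor `(v + n - 1)^p` is at most `n^p`, and what remains
integrates in `v` to `((n - x)^p - (n - 1 - x)^p) / p`; summing over `i` gives
`∑ |j_n(i)| ≤ σ c_H n^p ∫₀^{n-1} x^{-p} ((n - x)^p - (n - 1 - x)^p) dx`.
Split this integral at `(n - 1)/2`. On the left half the concavity bound
`(b + 1)^p - b^p ≤ p b^{p-1}` with `b ≥ (n - 1)/2` gives at most `p/(1 - p)`; on the right half
`x^{-p} ≤ ((n - 1)/2)^{-p}` and the same concavity bound give at most `1`. The total is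
`1/(1 - p) = 1/(3/2 - H)`. For `g_n`, the inner integral is at most `n^p / p` and `x^{-p} ≤ 1`
on `[n - 1, n]`, leaving `∫ (n - x)^p dx = 1/(H + 1/2)`.
-/

open intervalIntegral Set

lemma integral_sub_rpow {r : ℝ} (hr : -1 < r) (a b c : ℝ) :
    ∫ x in a..b, (c - x) ^ r = ((c - a) ^ (r + 1) - (c - b) ^ (r + 1)) / (r + 1) := by
  rw [integral_comp_sub_left (· ^ r) c, integral_rpow (Or.inl hr)]

lemma integral_add_rpow {r : ℝ} (hr : -1 < r) (a b c : ℝ) :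
    ∫ x in a..b, (x + c) ^ r = ((b + c) ^ (r + 1) - (a + c) ^ (r + 1)) / (r + 1) := by
  rw [integral_comp_add_right (· ^ r) c, integral_rpow (Or.inl hr)]

lemma intervalIntegrable_sub_rpow {r : ℝ} (hr : -1 < r) (a b c : ℝ) :
    IntervalIntegrable (fun x => (c - x) ^ r) volume a b := by
  simpa using (intervalIntegrable_rpow' hr (a := c - a) (b := c - b)).comp_sub_left c

lemma intervalIntegrable_add_rpow {r : ℝ} (hr : -1 < r) (a b c : ℝ) :
    IntervalIntegrable (fun x => (x + c) ^ r) volume a b := by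
  simpa using (intervalIntegrable_rpow' hr (a := a + c) (b := b + c)).comp_add_right c

lemma rpow_add_one_sub_rpow_le {p b : ℝ} (hb : 0 < b) (hp0 : 0 ≤ p) (hp1 : p ≤ 1) :
    (b + 1) ^ p - b ^ p ≤ p * b ^ (p - 1) := by
  have hbern : (1 + b⁻¹) ^ p ≤ 1 + p * b⁻¹ :=
    rpow_one_add_le_one_add_mul_self (by linarith [inv_pos.2 hb]) hp0 hp1
  have hsplit : b + 1 = b * (1 + b⁻¹) := by field_simp
  calc (b + 1) ^ p - b ^ p = b ^ p * ((1 + b⁻¹) ^ p - 1) := by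
        rw [hsplit, Real.mul_rpow hb.le (by positivity)]
        ring
    _ ≤ b ^ p * (p * b⁻¹) := by gcongr; linarith
    _ = p * b ^ (p - 1) := by rw [Real.rpow_sub_one hb.ne']; ring

lemma sum_Icc_integral_eq_integral {f : ℝ → ℝ} (hf : ∀ a b, IntervalIntegrable f volume a b)
    (m : ℕ) : ∑ i ∈ Finset.Icc 1 m, ∫ x in (i - 1 : ℝ)..i, f x = ∫ x in (0 : ℝ)..m, f x := by
  induction m with
  | zero => simp
  | succ m ih =>
    rw [Finset.sum_Icc_succ_top (by omega), ih, Nat.cast_succ, add_sub_cancel_right,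
      integral_add_adjacent_intervals (hf _ _) (hf _ _)]

noncomputable def incrementKernel (p c x : ℝ) : ℝ := x ^ (-p) * ((c + 1 - x) ^ p - (c - x) ^ p)

section IncrementKernel

variable {p c : ℝ}

lemma intervalIntegrable_incrementKernel (hp0 : 0 ≤ p) (hp1 : p < 1) (a b : ℝ) :
    IntervalIntegrable (incrementKernel p c) volume a b :=
  (intervalIntegrable_rpow' (by linarith)).mul_continuousOn <|
    ((continuous_const.sub continuous_id).rpow_const fun _ => Or.inr hp0).continuousOn.sub
      ((continuous_const.sub continuous_id).rpow_const fun _ => Or.inr hp0).continuousOn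

lemma integral_incrementKernel_left_le (hp0 : 0 ≤ p) (hp1 : p < 1) (hc : 0 < c) :
    ∫ x in (0 : ℝ)..c / 2, incrementKernel p c x ≤ p / (1 - p) := by
  have hc2 : 0 < c / 2 := by positivity
  calc ∫ x in (0 : ℝ)..c / 2, incrementKernel p c x
      ≤ ∫ x in (0 : ℝ)..c / 2, x ^ (-p) * (p * (c / 2) ^ (p - 1)) := by
        refine integral_mono_on hc2.le (intervalIntegrable_incrementKernel hp0 hp1 _ _)
          ((intervalIntegrable_rpow' (by linarith)).mul_const _) fun x ⟨hx0, hxc⟩ => ?_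
        have hcx : 0 < c - x := by linarith
        have hinc := rpow_add_one_sub_rpow_le hcx hp0 hp1.le
        rw [sub_add_eq_add_sub] at hinc
        refine mul_le_mul_of_nonneg_left (hinc.trans ?_) (Real.rpow_nonneg hx0 _)
        exact mul_le_mul_of_nonneg_left
          (Real.rpow_le_rpow_of_nonpos hc2 (by linarith) (by linarith)) hp0
    _ = p / (1 - p) := by
        have hcancel : (c / 2) ^ (1 - p) * (c / 2) ^ (p - 1) = 1 := by
          rw [← Real.rpow_add hc2, sub_add_sub_cancel', sub_self, Real.rpow_zero]
        rw [intervalIntegral.integral_mul_const, integral_rpow (Or.inl (by linarith)),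
          Real.zero_rpow (by linarith), sub_zero, neg_add_eq_sub, div_mul_eq_mul_div,
          mul_left_comm, hcancel, mul_one]

lemma integral_incrementKernel_right_le (hp0 : 0 < p) (hp1 : p < 1) (hc : 0 < c) :
    ∫ x in c / 2..c, incrementKernel p c x ≤ 1 := by
  have hc2 : 0 < c / 2 := by positivity
  calc ∫ x in c / 2..c, incrementKernel p c x
      ≤ ∫ x in c / 2..c, (c / 2) ^ (-p) * (p * (c - x) ^ (p - 1)) := by
        refine integral_mono_on_of_le_Ioo (by linarith)
          (intervalIntegrable_incrementKernel hp0.le hp1 _ _)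
          ((intervalIntegrable_sub_rpow (by linarith) _ _ _).const_mul _ |>.const_mul _)
          fun x ⟨hcx, hxc⟩ => ?_
        have hinc := rpow_add_one_sub_rpow_le (sub_pos.2 hxc) hp0.le hp1.le
        rw [sub_add_eq_add_sub] at hinc
        exact mul_le_mul (Real.rpow_le_rpow_of_nonpos hc2 hcx.le (by linarith)) hinc
          (sub_nonneg.2 (Real.rpow_le_rpow (sub_pos.2 hxc).le (by linarith) hp0.le))
          (by positivity)
    _ = 1 := by
        rw [intervalIntegral.integral_const_mul, intervalIntegral.integral_const_mul,
          integral_sub_rpow (by linarith), sub_self, sub_half, sub_add_cancel,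
          Real.zero_rpow hp0.ne', sub_zero, mul_div_cancel₀ _ hp0.ne', ← Real.rpow_add hc2,
          neg_add_cancel, Real.rpow_zero]

theorem integral_incrementKernel_le (hp0 : 0 < p) (hp1 : p < 1) (hc : 0 < c) :
    ∫ x in (0 : ℝ)..c, incrementKernel p c x ≤ 1 / (1 - p) := by
  rw [← integral_add_adjacent_intervals (b := c / 2)
    (intervalIntegrable_incrementKernel hp0.le hp1 _ _)
    (intervalIntegrable_incrementKernel hp0.le hp1 _ _)]
  calc _ ≤ p / (1 - p) + 1 := add_le_add (integral_incrementKernel_left_le hp0.le hp1 hc)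
        (integral_incrementKernel_right_le hp0 hp1 hc)
    _ = 1 / (1 - p) := by field_simp [(sub_pos.2 hp1).ne']; ring

end IncrementKernel

lemma abs_integral_jn_inner_le {p N t : ℝ} (hp : 0 < p) (ht0 : 0 ≤ t) (htN : t ≤ N - 1) :
    |∫ v in (0 : ℝ)..1, (v + N - 1) ^ p * (v + N - 1 - t) ^ (p - 1)|
      ≤ N ^ p / p * ((N - t) ^ p - (N - 1 - t) ^ p) := by
  calc |∫ v in (0 : ℝ)..1, (v + N - 1) ^ p * (v + N - 1 - t) ^ (p - 1)|
      ≤ ∫ v in (0 : ℝ)..1, N ^ p * (v + (N - 1 - t)) ^ (p - 1) := by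
        rw [← Real.norm_eq_abs]
        refine norm_integral_le_of_norm_le zero_le_one (Filter.Eventually.of_forall
          fun v ⟨hv0, hv1⟩ => ?_)
          ((intervalIntegrable_add_rpow (r := p - 1) (by linarith) _ _ _).const_mul _)
        rw [Real.norm_eq_abs, show v + N - 1 - t = v + (N - 1 - t) by ring,
          abs_of_nonneg (by apply mul_nonneg <;> apply Real.rpow_nonneg <;> linarith)]
        exact mul_le_mul_of_nonneg_right (Real.rpow_le_rpow (by linarith) (by linarith) hp.le)
          (Real.rpow_nonneg (by linarith) _)
    _ = N ^ p / p * ((N - t) ^ p - (N - 1 - t) ^ p) := by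
        rw [intervalIntegral.integral_const_mul, integral_add_rpow (by linarith), sub_add_cancel,
          zero_add, show 1 + (N - 1 - t) = N - t by ring]
        ring

lemma cH_nonneg (H : ℝ) : 0 ≤ cH H := Real.sqrt_nonneg _

lemma abs_jn_le {H σ : ℝ} (hH : H ∈ Ioo (1 / 2 : ℝ) 1) (hσ : 0 ≤ σ) {n i : ℕ} (hi : 1 ≤ i)
    (hin : i ≤ n - 1) :
    |jn H σ n i| ≤ σ * cH H * (n : ℝ) ^ (H - 1 / 2) *
      ∫ x in (i - 1 : ℝ)..i, incrementKernel (H - 1 / 2) (n - 1) x := by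
  obtain ⟨hH1, hH2⟩ := hH
  have hp : 0 < H - 1 / 2 := by linarith
  have hp1 : H - 1 / 2 < 1 := by linarith
  have hi1 : (1 : ℝ) ≤ i := by exact_mod_cast hi
  have hin' : (i : ℝ) ≤ n - 1 := by
    rw [le_sub_iff_add_le]; exact_mod_cast (by omega : i + 1 ≤ n)
  have hconst : 0 ≤ σ * cH H * (H - 1 / 2) := mul_nonneg (mul_nonneg hσ (cH_nonneg H)) hp.le
  rw [jn, abs_mul, abs_of_nonneg hconst,
    show H - 3 / 2 = H - 1 / 2 - 1 by ring, show (1 : ℝ) / 2 - H = -(H - 1 / 2) by ring]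
  set p := H - 1 / 2
  calc σ * cH H * p * |∫ x in (i - 1 : ℝ)..i, x ^ (-p) *
        ∫ v in (0 : ℝ)..1, (v + n - 1) ^ p * (v + n - 1 - x) ^ (p - 1)|
      ≤ σ * cH H * p * ∫ x in (i - 1 : ℝ)..i, (n : ℝ) ^ p / p * incrementKernel p (n - 1) x := by
        refine mul_le_mul_of_nonneg_left ?_ hconst
        rw [← Real.norm_eq_abs]
        refine norm_integral_le_of_norm_le (by linarith) (Filter.Eventually.of_forall
          fun x ⟨hx0, hx1⟩ => ?_) ((intervalIntegrable_incrementKernel hp.le hp1 _ _).const_mul _)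
        rw [norm_mul, Real.norm_eq_abs, Real.norm_eq_abs,
          abs_of_nonneg (Real.rpow_nonneg (by linarith) _)]
        calc x ^ (-p) * |∫ v in (0 : ℝ)..1, (v + n - 1) ^ p * (v + n - 1 - x) ^ (p - 1)|
            ≤ x ^ (-p) * ((n : ℝ) ^ p / p * ((n - x) ^ p - (n - 1 - x) ^ p)) :=
              mul_le_mul_of_nonneg_left (abs_integral_jn_inner_le hp (by linarith) (by linarith))
                (Real.rpow_nonneg (by linarith) _)
          _ = (n : ℝ) ^ p / p * incrementKernel p (n - 1) x := by
              rw [incrementKernel, sub_add_cancel]; ring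
    _ = σ * cH H * (n : ℝ) ^ p * ∫ x in (i - 1 : ℝ)..i, incrementKernel p (n - 1) x := by
        rw [intervalIntegral.integral_const_mul]; field_simp

lemma sum_abs_jn_le {H σ : ℝ} (hH : H ∈ Ioo (1 / 2 : ℝ) 1) (hσ : 0 ≤ σ) {n : ℕ} (hn : 2 ≤ n) :
    ∑ i ∈ Finset.Icc 1 (n - 1), |jn H σ n i| ≤ σ * cH H / (3 / 2 - H) * (n : ℝ) ^ (H - 1 / 2) := by
  obtain ⟨hH1, hH2⟩ := hH
  have hcast : ((n - 1 : ℕ) : ℝ) = n - 1 := by rw [Nat.cast_sub (by omega), Nat.cast_one]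
  have hn2 : (2 : ℝ) ≤ n := by exact_mod_cast hn
  have hconst : 0 ≤ σ * cH H * (n : ℝ) ^ (H - 1 / 2) :=
    mul_nonneg (mul_nonneg hσ (cH_nonneg H)) (by positivity)
  calc ∑ i ∈ Finset.Icc 1 (n - 1), |jn H σ n i|
      ≤ ∑ i ∈ Finset.Icc 1 (n - 1), σ * cH H * (n : ℝ) ^ (H - 1 / 2) *
          ∫ x in (i - 1 : ℝ)..i, incrementKernel (H - 1 / 2) (n - 1) x :=
        Finset.sum_le_sum fun i hi =>
          abs_jn_le ⟨hH1, hH2⟩ hσ (Finset.mem_Icc.1 hi).1 (Finset.mem_Icc.1 hi).2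
    _ = σ * cH H * (n : ℝ) ^ (H - 1 / 2) *
          ∫ x in (0 : ℝ)..(n - 1), incrementKernel (H - 1 / 2) (n - 1) x := by
        rw [← Finset.mul_sum, sum_Icc_integral_eq_integral
          (intervalIntegrable_incrementKernel (by linarith) (by linarith)), hcast]
    _ ≤ σ * cH H * (n : ℝ) ^ (H - 1 / 2) * (1 / (1 - (H - 1 / 2))) :=
        mul_le_mul_of_nonneg_left
          (integral_incrementKernel_le (by linarith) (by linarith) (by linarith)) hconst
    _ = σ * cH H / (3 / 2 - H) * (n : ℝ) ^ (H - 1 / 2) := by ring_nf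

lemma abs_integral_gn_inner_le {p N t : ℝ} (hp : 0 < p) (ht0 : 0 ≤ t) (htN : t ≤ N) :
    |∫ y in (0 : ℝ)..1, (y * (N - t) + t) ^ p * y ^ (p - 1)| ≤ N ^ p / p := by
  calc |∫ y in (0 : ℝ)..1, (y * (N - t) + t) ^ p * y ^ (p - 1)|
      ≤ ∫ y in (0 : ℝ)..1, N ^ p * y ^ (p - 1) := by
        rw [← Real.norm_eq_abs]
        refine norm_integral_le_of_norm_le zero_le_one (Filter.Eventually.of_forall
          fun y ⟨hy0, hy1⟩ => ?_) ((intervalIntegrable_rpow' (by linarith)).const_mul _)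
        have hbase0 : 0 ≤ y * (N - t) + t := by nlinarith
        have hbaseN : y * (N - t) + t ≤ N := by nlinarith
        rw [Real.norm_eq_abs, abs_of_nonneg (mul_nonneg (Real.rpow_nonneg hbase0 _)
          (Real.rpow_nonneg hy0.le _))]
        exact mul_le_mul_of_nonneg_right (Real.rpow_le_rpow hbase0 hbaseN hp.le)
          (Real.rpow_nonneg hy0.le _)
    _ = N ^ p / p := by
        rw [intervalIntegral.integral_const_mul, integral_rpow (Or.inl (by linarith)),
          sub_add_cancel, Real.one_rpow, Real.zero_rpow hp.ne', sub_zero, mul_one_div]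

lemma abs_gn_le {H σ : ℝ} (hH : H ∈ Ioo (1 / 2 : ℝ) 1) (hσ : 0 ≤ σ) {n : ℕ} (hn : 2 ≤ n) :
    |gn H σ n| ≤ σ * cH H / (H + 1 / 2) * (n : ℝ) ^ (H - 1 / 2) := by
  obtain ⟨hH1, hH2⟩ := hH
  have hp : 0 < H - 1 / 2 := by linarith
  have hn2 : (2 : ℝ) ≤ n := by exact_mod_cast hn
  have hconst : 0 ≤ σ * cH H * (H - 1 / 2) := mul_nonneg (mul_nonneg hσ (cH_nonneg H)) hp.le
  rw [gn, abs_mul, abs_of_nonneg hconst, show H - 3 / 2 = H - 1 / 2 - 1 by ring,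
    show (1 : ℝ) / 2 - H = -(H - 1 / 2) by ring, show H + 1 / 2 = H - 1 / 2 + 1 by ring]
  set p := H - 1 / 2
  calc σ * cH H * p * |∫ x in (n - 1 : ℝ)..n, x ^ (-p) * (n - x) ^ p *
        ∫ y in (0 : ℝ)..1, (y * (n - x) + x) ^ p * y ^ (p - 1)|
      ≤ σ * cH H * p * ∫ x in (n - 1 : ℝ)..n, (n : ℝ) ^ p / p * (n - x) ^ p := by
        refine mul_le_mul_of_nonneg_left ?_ hconst
        rw [← Real.norm_eq_abs]
        refine norm_integral_le_of_norm_le (by linarith) (Filter.Eventually.of_forall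
          fun x ⟨hx0, hx1⟩ => ?_) ((intervalIntegrable_sub_rpow (by linarith) _ _ _).const_mul _)
        have hnx : (0 : ℝ) ≤ (n - x) ^ p := Real.rpow_nonneg (by linarith) _
        rw [norm_mul, norm_mul, Real.norm_eq_abs, Real.norm_eq_abs, Real.norm_eq_abs,
          abs_of_nonneg (Real.rpow_nonneg (by linarith) _), abs_of_nonneg hnx, mul_comm]
        have hweight : x ^ (-p) ≤ 1 :=
          Real.rpow_le_one_of_one_le_of_nonpos (by linarith) (by linarith)
        exact mul_le_mul (abs_integral_gn_inner_le hp (by linarith) hx1)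
          (mul_le_of_le_one_left hnx hweight) (mul_nonneg (Real.rpow_nonneg (by linarith) _) hnx)
          (div_nonneg (Real.rpow_nonneg (by linarith) _) hp.le)
    _ = σ * cH H / (p + 1) * (n : ℝ) ^ p := by
        rw [intervalIntegral.integral_const_mul, integral_sub_rpow (by linarith), sub_sub_cancel,
          sub_self, Real.one_rpow, Real.zero_rpow (by linarith), sub_zero]
        field_simp

/-- Lemma 5.2 (`ubx`): with `c_X = σ c_H/(3/2 - H) + σ c_H/(H + 1/2)`, for every `n ≥ 2`
and every sign vector `x ∈ {-1,1}^n`,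
`|∑_{i=1}^{n-1} j_n(i) x_i + g_n x_n| ≤ c_X n^{H-1/2}`. -/
theorem abs_Xn_bound (H σ : ℝ) (hH : H ∈ Set.Ioo (1/2 : ℝ) 1) (hσ : 0 < σ)
    (n : ℕ) (hn : 2 ≤ n) (x : ℕ → ℝ) (hx : ∀ i, x i = -1 ∨ x i = 1) :
    |(∑ i ∈ Finset.Icc 1 (n - 1), jn H σ n i * x i) + gn H σ n * x n|
      ≤ (σ * cH H / (3/2 - H) + σ * cH H / (H + 1/2)) * (n : ℝ) ^ (H - 1/2) := by
  have habs : ∀ i, |x i| = 1 := fun i => by rcases hx i with h | h <;> simp [h]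
  calc |(∑ i ∈ Finset.Icc 1 (n - 1), jn H σ n i * x i) + gn H σ n * x n|
      ≤ (∑ i ∈ Finset.Icc 1 (n - 1), |jn H σ n i * x i|) + |gn H σ n * x n| :=
        (abs_add_le _ _).trans (add_le_add_left (Finset.abs_sum_le_sum_abs _ _) _)
    _ = (∑ i ∈ Finset.Icc 1 (n - 1), |jn H σ n i|) + |gn H σ n| := by
        simp only [abs_mul, habs, mul_one]
    _ ≤ σ * cH H / (3/2 - H) * (n : ℝ) ^ (H - 1/2)
          + σ * cH H / (H + 1/2) * (n : ℝ) ^ (H - 1/2) :=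
        add_le_add (sum_abs_jn_le hH hσ.le hn) (abs_gn_le hH hσ.le hn)
    _ = (σ * cH H / (3/2 - H) + σ * cH H / (H + 1/2)) * (n : ℝ) ^ (H - 1/2) := by ring
end
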